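/- arXiv:1011.1449 — 11 statements merged into one kernel-verified Lean document; each statement's English description precedes it below -/
import Mathlib

section
/- For every n > 0, the function f(x) = [ (2(n+1))/(n(n+2)) · cos²( n·x / (2(n+1)) ) ]^{1/n}, defined for |x| < π(n+1)/n, satisfies the ordinary differential equation (f^{n+1})''(x) + f(x)^{n+1} = (1/n)·f(x) at every x in the open interval (−π(n+1)/n, π(n+1)/n). -/
/-!
Write `g = f ^ n = C cos² (a x)` with `a = n / (2 (n + 1))` and `C = 2 (n + 1) / (n (n + 2))`.
Then `f ^ (n + 1) = g ^ (1 + 1/n)`, and the chain rule gives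
`(g ^ (1 + 1/n))'' + g ^ (1 + 1/n) = g ^ (1/n - 1) · ((1 + 1/n) (g'² / n + g g'') + g²)`,
so the equation for `f` reduces to `(1 + 1/n) (g'² / n + g g'') + g² = g / n`, a trigonometric
identity in which the constants `a` and `C` are exactly what makes the coefficients match.
On `|x| < π (n + 1) / n` we have `|a x| < π / 2`, so `g > 0` and the real powers are smooth.
-/

open Real Filter Topology

theorem hasDerivAt_deriv_rpow_const {g g' : ℝ → ℝ} {g'' x p : ℝ}
    (hg : ∀ᶠ y in 𝓝 x, HasDerivAt g (g' y) y) (hg' : HasDerivAt g' g'' x) (hx : 0 < g x) :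
    HasDerivAt (deriv fun y => g y ^ p)
      (p * (p - 1) * g x ^ (p - 2) * g' x ^ 2 + p * g x ^ (p - 1) * g'') x := by
  have hpos : ∀ᶠ y in 𝓝 x, 0 < g y :=
    hg.self_of_nhds.continuousAt.eventually (lt_mem_nhds hx)
  have hderiv : deriv (fun y => g y ^ p) =ᶠ[𝓝 x] fun y => p * g y ^ (p - 1) * g' y := by
    filter_upwards [hg, hpos] with y hgy hy
    rw [(hgy.rpow_const (Or.inl hy.ne')).deriv]
    ring
  have hpow : HasDerivAt (fun y => g y ^ (p - 1)) (g' x * (p - 1) * g x ^ (p - 1 - 1)) x :=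
    hg.self_of_nhds.rpow_const (Or.inl hx.ne')
  refine (((hpow.const_mul p).mul hg').congr_of_eventuallyEq hderiv).congr_deriv ?_
  rw [show p - 1 - 1 = p - 2 by ring]
  ring

theorem hasDerivAt_mul_cos_sq (C a y : ℝ) :
    HasDerivAt (fun y => C * cos (a * y) ^ 2) (-(a * C) * sin (2 * (a * y))) y := by
  refine ((((hasDerivAt_id' y).const_mul a).cos.pow 2).const_mul C).congr_deriv ?_
  rw [sin_two_mul]
  push_cast
  ring

theorem hasDerivAt_mul_sin_two_mul (C a y : ℝ) :
    HasDerivAt (fun y => -(a * C) * sin (2 * (a * y)))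
      (-(2 * a ^ 2 * C) * cos (2 * (a * y))) y := by
  refine ((((hasDerivAt_id' y).const_mul a).const_mul 2).sin.const_mul (-(a * C))).congr_deriv ?_
  ring

theorem cos_sq_profile_ode {n a C : ℝ} (hn : 0 < n) (ha : a = n / (2 * (n + 1)))
    (hC : C = 2 * (n + 1) / (n * (n + 2))) (θ : ℝ) :
    (1 + 1 / n) * ((-(a * C) * sin (2 * θ)) ^ 2 / n
        + C * cos θ ^ 2 * (-(2 * a ^ 2 * C) * cos (2 * θ)))
      + (C * cos θ ^ 2) ^ 2 = C * cos θ ^ 2 / n := by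
  rw [cos_sq θ, mul_pow, sin_sq, ha, hC]
  field_simp
  ring

theorem rpow_ode_of_pow_ode {n G d₁ d₂ : ℝ} (hn : n ≠ 0) (hG : 0 < G)
    (h : (1 + 1 / n) * (d₁ ^ 2 / n + G * d₂) + G ^ 2 = G / n) :
    (1 + 1 / n) * (1 + 1 / n - 1) * G ^ (1 + 1 / n - 2) * d₁ ^ 2
        + (1 + 1 / n) * G ^ (1 + 1 / n - 1) * d₂ + G ^ (1 + 1 / n)
      = 1 / n * G ^ (1 / n) := by
  rw [show 1 + 1 / n - 2 = 1 / n - 1 by ring, show 1 + 1 / n - 1 = 1 / n by ring,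
    rpow_sub_one hG.ne', rpow_add hG, rpow_one]
  calc _ = G ^ (1 / n) / G * ((1 + 1 / n) * (d₁ ^ 2 / n + G * d₂) + G ^ 2) := by
        field_simp
    _ = 1 / n * G ^ (1 / n) := by
        rw [h]
        field_simp

/-- For every `n > 0`, the Zmitrenko–Kurdyumov compacton profile
`f(x) = [ (2(n+1))/(n(n+2)) · cos²( n·x / (2(n+1)) ) ]^{1/n}` satisfies
`(f^{n+1})'' + f^{n+1} = (1/n)·f` at every `x` with `|x| < π(n+1)/n`. -/
theorem stmt0 (n : ℝ) (hn : 0 < n) (x : ℝ)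
    (hx : |x| < Real.pi * (n + 1) / n) :
    deriv (deriv (fun y : ℝ =>
        ((2 * (n + 1) / (n * (n + 2)) * (Real.cos (n * y / (2 * (n + 1)))) ^ 2)
          ^ (1 / n)) ^ (n + 1))) x
      + ((2 * (n + 1) / (n * (n + 2)) * (Real.cos (n * x / (2 * (n + 1)))) ^ 2)
          ^ (1 / n)) ^ (n + 1)
      = (1 / n) *
        ((2 * (n + 1) / (n * (n + 2)) * (Real.cos (n * x / (2 * (n + 1)))) ^ 2)
          ^ (1 / n)) := by
  set a := n / (2 * (n + 1)) with ha
  set C := 2 * (n + 1) / (n * (n + 2)) with hC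
  have hg : ∀ y, C * cos (n * y / (2 * (n + 1))) ^ 2 = C * cos (a * y) ^ 2 := fun y => by
    rw [mul_div_right_comm]
  have hpow : ∀ y, ((C * cos (a * y) ^ 2) ^ (1 / n)) ^ (n + 1)
      = (C * cos (a * y) ^ 2) ^ (1 + 1 / n) := fun y => by
    rw [← rpow_mul (by positivity), show 1 / n * (n + 1) = 1 + 1 / n by field_simp]
  have hax : |a * x| < π / 2 :=
    calc |a * x| = a * |x| := by rw [abs_mul, abs_of_pos (by positivity)]
      _ < a * (π * (n + 1) / n) := by gcongr
      _ = π / 2 := by rw [ha]; field_simp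
  have hgx : 0 < C * cos (a * x) ^ 2 := by
    have := cos_pos_of_mem_Ioo (abs_lt.mp hax)
    positivity
  have hF := hasDerivAt_deriv_rpow_const (p := 1 + 1 / n)
    (Eventually.of_forall (hasDerivAt_mul_cos_sq C a)) (hasDerivAt_mul_sin_two_mul C a x) hgx
  simp only [hg, hpow]
  rw [hF.deriv]
  exact rpow_ode_of_pow_ode hn.ne' hgx (cos_sq_profile_ode hn ha hC (a * x))
end

section
/- Let n > 0 and y0 < 0. Set γ = 2(n+1)/n and C0 = ( n²·|y0| / (2(n+1)(n+2)(n+3)) )^{(n+1)/n}, and define Y(y) = C0·(y − y0)^γ for y ≥ y0. Then: (i) Y''(y) = (|y0|/(n+3))·Y(y)^{1/(n+1)} for all y > y0; (ii) the residual R(y) := Y''(y) + (1/(n+3))·y·Y(y)^{1/(n+1)} satisfies the exact identity R(y) = ((y − y0)/|y0|)·Y''(y), so in particular R(y)/Y''(y) → 0 as y → y0⁺; hence Y solves the rescaled equation Y'' = −(1/(n+3))·y·Y^{1/(n+1)} to leading order near the interface y = y0. -/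
/-!
Away from the interface `Y` is a pure power of `y - y0`, so `Y''` is again a power, and the
exponent `γ = 2(n+1)/n` is exactly the one for which `γ - 2 = γ/(n+1)`: both `Y''` and
`Y^{1/(n+1)}` are multiples of `(y - y0)^{2/n}`, and `C0` is chosen to match the multiples with
the value `|y0|/(n+3)` of the coefficient `-y/(n+3)` at `y = y0`. Writing
`y = y0 + (y - y0)` in the coefficient `-y/(n+3)` then leaves the residual
`((y - y0)/|y0|) Y''`, which is small relative to `Y''` at the interface.
-/

open Filter Topology

lemma hasDerivAt_const_mul_sub_rpow (c a γ : ℝ) {y : ℝ} (hy : y ≠ a) :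
    HasDerivAt (fun z => c * (z - a) ^ γ) (c * γ * (y - a) ^ (γ - 1)) y := by
  have h := ((hasDerivAt_id' y).sub_const a).rpow_const (p := γ) (Or.inl (sub_ne_zero.mpr hy))
  rw [one_mul] at h
  simpa only [mul_assoc] using h.const_mul c

lemma deriv_deriv_const_mul_sub_rpow (c a γ : ℝ) {y : ℝ} (hy : y ≠ a) :
    deriv (deriv fun z => c * (z - a) ^ γ) y = c * γ * (γ - 1) * (y - a) ^ (γ - 2) := by
  have hderiv : deriv (fun z => c * (z - a) ^ γ) =ᶠ[𝓝 y] fun z => c * γ * (z - a) ^ (γ - 1) := by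
    filter_upwards [eventually_ne_nhds hy] with z hz
    exact (hasDerivAt_const_mul_sub_rpow c a γ hz).deriv
  rw [hderiv.deriv_eq, (hasDerivAt_const_mul_sub_rpow (c * γ) a (γ - 1) hy).deriv, sub_sub,
    one_add_one_eq_two, mul_assoc]

section Profile

variable {n : ℝ} (hn : 0 < n)
include hn

lemma profile_rpow_one_div_add_one {A t : ℝ} (hA : 0 ≤ A) (ht : 0 ≤ t) :
    (A ^ ((n + 1) / n) * t ^ (2 * (n + 1) / n)) ^ (1 / (n + 1)) = A ^ (1 / n) * t ^ (2 / n) := by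
  have hn1 : n + 1 ≠ 0 := by positivity
  rw [Real.mul_rpow (Real.rpow_nonneg hA _) (Real.rpow_nonneg ht _), ← Real.rpow_mul hA,
    ← Real.rpow_mul ht]
  congr 2 <;> field_simp

lemma profile_coeff_mul_eq {b : ℝ} :
    n ^ 2 * b / (2 * (n + 1) * (n + 2) * (n + 3)) * (2 * (n + 1) / n * (2 * (n + 1) / n - 1))
      = b / (n + 3) := by
  have : n + 1 ≠ 0 := by positivity
  have : n + 2 ≠ 0 := by positivity
  have : n + 3 ≠ 0 := by positivity
  field_simp
  ring

lemma profile_second_deriv_eq {b t : ℝ} (hb : 0 ≤ b) (ht : 0 ≤ t) :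
    let γ := 2 * (n + 1) / n
    let C0 := (n ^ 2 * b / (2 * (n + 1) * (n + 2) * (n + 3))) ^ ((n + 1) / n)
    C0 * γ * (γ - 1) * t ^ (γ - 2) = b / (n + 3) * (C0 * t ^ γ) ^ (1 / (n + 1)) := by
  intro γ C0
  set A := n ^ 2 * b / (2 * (n + 1) * (n + 2) * (n + 3))
  have hA : 0 ≤ A := by positivity
  have hC0 : C0 = A ^ (1 / n) * A := by
    show A ^ ((n + 1) / n) = _
    rw [show (n + 1) / n = 1 / n + 1 by field_simp; ring, Real.rpow_add_one' hA (by positivity)]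
  have hγ2 : γ - 2 = 2 / n := by
    simp only [γ]
    field_simp
    ring
  rw [hγ2, profile_rpow_one_div_add_one hn hA ht, hC0, ← profile_coeff_mul_eq hn]
  ring

end Profile

lemma residual_eq_of_second_deriv_eq {a k D P : ℝ} (y : ℝ) (ha : a < 0) (hk : k ≠ 0)
    (hD : D = |a| / k * P) :
    D + 1 / k * y * P = (y - a) / |a| * D := by
  rw [hD, abs_of_neg ha]
  field_simp [ha.ne]
  ring

lemma tendsto_div_nhdsGT_zero_of_eq_mul {R D : ℝ → ℝ} {a c : ℝ}
    (hRD : ∀ y, a < y → R y = (y - a) / c * D y) (hD : ∀ y, a < y → D y ≠ 0) :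
    Tendsto (fun y => R y / D y) (𝓝[>] a) (𝓝 0) := by
  have hratio : (fun y => (y - a) / c) =ᶠ[𝓝[>] a] fun y => R y / D y := by
    filter_upwards [self_mem_nhdsWithin] with y hy
    rw [hRD y hy, mul_div_assoc, div_self (hD y hy), mul_one]
  have hlim : Tendsto (fun y => (y - a) / c) (𝓝[>] a) (𝓝 ((a - a) / c)) :=
    ((continuous_id.sub continuous_const).div_const c).continuousWithinAt.tendsto
  rw [sub_self, zero_div] at hlim
  exact hlim.congr' hratio

/-- Exact local behaviour of the first nonlinear eigenfunction
near the left-hand interface `y0 < 0` (case `k = 1`, `l = 0`):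
with `γ = 2(n+1)/n` and `C0 = (n²|y0|/(2(n+1)(n+2)(n+3)))^{(n+1)/n}`,
the function `Y(y) = C0 (y-y0)^γ` satisfies
(i) `Y'' = (|y0|/(n+3)) Y^{1/(n+1)}` for `y > y0`,
(ii) the residual `R = Y'' + (1/(n+3)) y Y^{1/(n+1)}` equals `((y-y0)/|y0|) Y''`,
and `R/Y'' → 0` as `y → y0⁺`. -/
theorem stmt1 (n y0 : ℝ) (hn : 0 < n) (hy0 : y0 < 0) :
    let γ : ℝ := 2 * (n + 1) / n
    let C0 : ℝ := (n ^ 2 * |y0| / (2 * (n + 1) * (n + 2) * (n + 3))) ^ ((n + 1) / n)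
    let Y : ℝ → ℝ := fun y => C0 * (y - y0) ^ γ
    (∀ y : ℝ, y0 < y →
      deriv (deriv Y) y = (|y0| / (n + 3)) * Y y ^ (1 / (n + 1))) ∧
    (∀ y : ℝ, y0 < y →
      deriv (deriv Y) y + (1 / (n + 3)) * y * Y y ^ (1 / (n + 1))
        = ((y - y0) / |y0|) * deriv (deriv Y) y) ∧
    Filter.Tendsto
      (fun y : ℝ =>
        (deriv (deriv Y) y + (1 / (n + 3)) * y * Y y ^ (1 / (n + 1)))
          / deriv (deriv Y) y)
      (nhdsWithin y0 (Set.Ioi y0)) (nhds 0) := by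
  intro γ C0 Y
  have hn3 : n + 3 ≠ 0 := by positivity
  have hequation : ∀ y, y0 < y → deriv (deriv Y) y = |y0| / (n + 3) * Y y ^ (1 / (n + 1)) :=
    fun y hy => (deriv_deriv_const_mul_sub_rpow C0 y0 γ hy.ne').trans
      (profile_second_deriv_eq hn (abs_nonneg y0) (sub_nonneg.mpr hy.le))
  have hresidual : ∀ y, y0 < y → deriv (deriv Y) y + 1 / (n + 3) * y * Y y ^ (1 / (n + 1))
      = (y - y0) / |y0| * deriv (deriv Y) y :=
    fun y hy => residual_eq_of_second_deriv_eq y hy0 hn3 (hequation y hy)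
  have hne : ∀ y, y0 < y → deriv (deriv Y) y ≠ 0 := by
    intro y hy
    have : 0 < y - y0 := sub_pos.mpr hy
    have : 0 < |y0| := abs_pos.mpr hy0.ne
    rw [hequation y hy]
    positivity
  exact ⟨hequation, hresidual, tendsto_div_nhdsGT_zero_of_eq_mul hresidual hne⟩
end

section
/- Let n > 0 and let k ≥ 2 be an even integer. Set m = (2k+1)(n+1)/n, which is the unique exponent satisfying the balance m − 2k = 1 + m/(n+1) (in particular m > 2k, so all factors m − j, j = 0, …, 2k−1, are positive), and let A = [ ((2k+1)+n) · ∏_{j=0}^{2k−1} (m − j) ]^{−(n+1)/n} > 0. Then for each sign ε ∈ {−1, +1} the function Y(y) = ε·A·y^m satisfies (−1)^{k+1}·Y^{(2k)}(y) + (1/((2k+1)+n))·y·N_n(Y(y)) = 0 for all y > 0. Thus for even k the equation admits a pair of exact algebraically growing solutions as y → +∞, the amplitude A being determined by |A|^{−n/(n+1)} = (−1)^k·m(m−1)⋯(m−2k+1)·((2k+1)+n). -/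
/-- The odd power nonlinearity `N_n(Y) = |Y|^{-n/(n+1)}·Y` (with `N_n(0) = 0`). -/
noncomputable def Nn (n Y : ℝ) : ℝ := |Y| ^ (-(n / (n + 1))) * Y

/-!
The ansatz `Y = ε A y^m` turns both terms of the equation into multiples of `ε A y^(m - 2k)`:
`Y^(2k) = ε A m(m-1)⋯(m-2k+1) y^(m-2k)`, while `y N_n(Y) = ε A^{1/(n+1)} y^{1 + m/(n+1)}`.
The powers of `y` agree exactly when `m - 2k = 1 + m/(n+1)`, which fixes `m`, and then the
coefficients cancel exactly when `A^{-n/(n+1)} = ((2k+1)+n) m(m-1)⋯(m-2k+1)`, which fixes `A`;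
the sign `(-1)^{k+1} = -1` for even `k` is what makes the two terms cancel rather than add.
-/

open Finset Real

theorem iteratedDeriv_const_mul_rpow (c m y : ℝ) (N : ℕ) :
    iteratedDeriv N (fun t : ℝ => c * t ^ m) y
      = c * (∏ j ∈ range N, (m - (j : ℝ))) * y ^ (m - N) := by
  rw [iteratedDeriv_const_mul_field, iteratedDeriv_eq_iterate, iter_deriv_rpow_const,
    descPochhammer_eval_eq_prod_range, mul_assoc]

theorem Nn_mul_of_abs_eq_one {ε : ℝ} (hε : |ε| = 1) (n Y : ℝ) : Nn n (ε * Y) = ε * Nn n Y := by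
  simp only [Nn, abs_mul, hε, one_mul]
  ring

theorem Nn_of_pos {n Y : ℝ} (hn : n + 1 ≠ 0) (hY : 0 < Y) : Nn n Y = Y ^ (n + 1)⁻¹ := by
  rw [Nn, abs_of_pos hY, ← rpow_add_one hY.ne']
  congr 1
  field_simp
  ring

theorem iteratedDeriv_rpow_eq_mul_Nn {n m s A ε y : ℝ} {N : ℕ} (hn : n + 1 ≠ 0) (hA : 0 < A)
    (hε : |ε| = 1) (hy : 0 < y) (hs : s ≠ 0) (hbal : m - N = 1 + m / (n + 1))
    (hamp : A ^ (-(n / (n + 1))) = s * ∏ j ∈ range N, (m - (j : ℝ))) :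
    iteratedDeriv N (fun t : ℝ => ε * A * t ^ m) y = s⁻¹ * y * Nn n (ε * A * y ^ m) := by
  have hroot : A ^ (n + 1)⁻¹ = A ^ (-(n / (n + 1))) * A := by
    rw [← rpow_add_one hA.ne']
    congr 1
    field_simp
    ring
  have hNn : y * Nn n (ε * A * y ^ m)
      = ε * (s * ∏ j ∈ range N, (m - (j : ℝ))) * A * y ^ (m - N) := by
    rw [mul_assoc ε, Nn_mul_of_abs_eq_one hε, Nn_of_pos hn (by positivity),
      mul_rpow hA.le (rpow_nonneg hy.le _), ← rpow_mul hy.le, hroot, hamp, hbal,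
      rpow_add hy, rpow_one, ← div_eq_mul_inv]
    ring
  rw [iteratedDeriv_const_mul_rpow, mul_assoc s⁻¹, hNn]
  field_simp

theorem stmt4_general (n : ℝ) (hn : 0 < n) (k : ℕ) (hke : Even k) :
    let m : ℝ := (2 * (k : ℝ) + 1) * (n + 1) / n
    let A : ℝ := ((2 * (k : ℝ) + 1 + n) * ∏ j ∈ Finset.range (2 * k), (m - (j : ℝ)))
      ^ (-((n + 1) / n))
    (m - 2 * (k : ℝ) = 1 + m / (n + 1)) ∧
    (2 * (k : ℝ) < m) ∧
    (∀ j ∈ Finset.range (2 * k), (0 : ℝ) < m - (j : ℝ)) ∧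
    (0 < A) ∧
    (|A| ^ (-(n / (n + 1)))
      = (-1 : ℝ) ^ k * (∏ j ∈ Finset.range (2 * k), (m - (j : ℝ)))
        * (2 * (k : ℝ) + 1 + n)) ∧
    (∀ ε : ℝ, ε = -1 ∨ ε = 1 → ∀ y : ℝ, 0 < y →
      (-1 : ℝ) ^ (k + 1) * iteratedDeriv (2 * k) (fun t : ℝ => ε * A * t ^ m) y
        + (1 / (2 * (k : ℝ) + 1 + n)) * y * Nn n (ε * A * y ^ m) = 0) := by
  intro m A
  have hbal : m - 2 * (k : ℝ) = 1 + m / (n + 1) := by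
    simp only [m]
    field_simp
    ring
  have hlt : 2 * (k : ℝ) < m := by
    simp only [m]
    rw [lt_div_iff₀ hn]
    nlinarith [k.cast_nonneg (α := ℝ)]
  have hfactors : ∀ j ∈ range (2 * k), (0 : ℝ) < m - (j : ℝ) := fun j hj => by
    have : (j : ℝ) < 2 * k := by exact_mod_cast mem_range.mp hj
    linarith
  set S : ℝ := 2 * (k : ℝ) + 1 + n
  set P : ℝ := ∏ j ∈ range (2 * k), (m - (j : ℝ))
  have hSP : 0 < S * P := mul_pos (by positivity) (prod_pos hfactors)
  have hA : 0 < A := rpow_pos_of_pos hSP _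
  have hamp : A ^ (-(n / (n + 1))) = S * P := by
    rw [show -(n / (n + 1)) = (-((n + 1) / n))⁻¹ by rw [inv_neg, inv_div],
      rpow_rpow_inv hSP.le (neg_ne_zero.mpr (by positivity))]
  refine ⟨hbal, hlt, hfactors, hA, ?_, fun ε hε y hy => ?_⟩
  · rw [abs_of_pos hA, hamp, hke.neg_one_pow]
    ring
  · have hε' : |ε| = 1 := by rcases hε with rfl | rfl <;> norm_num
    rw [iteratedDeriv_rpow_eq_mul_Nn (by positivity) hA hε' hy (s := S) (by positivity)
      (by push_cast; exact hbal) hamp, hke.add_one.neg_one_pow]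
    ring

/-- For `n > 0` and even `k ≥ 2`, with `m = (2k+1)(n+1)/n`
(the balance exponent, `m - 2k = 1 + m/(n+1)`, `m > 2k`, all factors `m - j`
positive) and `A = [((2k+1)+n)·∏_{j<2k}(m-j)]^{-(n+1)/n} > 0`, the functions
`Y(y) = ±A·y^m` solve `(-1)^{k+1} Y^{(2k)} + (1/((2k+1)+n))·y·N_n(Y) = 0` on
`(0, ∞)`, the amplitude satisfying
`|A|^{-n/(n+1)} = (-1)^k·m(m-1)⋯(m-2k+1)·((2k+1)+n)`. -/
theorem stmt4 (n : ℝ) (hn : 0 < n) (k : ℕ) (hk : 2 ≤ k) (hke : Even k) :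
    let m : ℝ := (2 * (k : ℝ) + 1) * (n + 1) / n
    let A : ℝ := ((2 * (k : ℝ) + 1 + n) * ∏ j ∈ Finset.range (2 * k), (m - (j : ℝ)))
      ^ (-((n + 1) / n))
    (m - 2 * (k : ℝ) = 1 + m / (n + 1)) ∧
    (2 * (k : ℝ) < m) ∧
    (∀ j ∈ Finset.range (2 * k), (0 : ℝ) < m - (j : ℝ)) ∧
    (0 < A) ∧
    (|A| ^ (-(n / (n + 1)))
      = (-1 : ℝ) ^ k * (∏ j ∈ Finset.range (2 * k), (m - (j : ℝ)))
        * (2 * (k : ℝ) + 1 + n)) ∧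
    (∀ ε : ℝ, ε = -1 ∨ ε = 1 → ∀ y : ℝ, 0 < y →
      (-1 : ℝ) ^ (k + 1) * iteratedDeriv (2 * k) (fun t : ℝ => ε * A * t ^ m) y
        + (1 / (2 * (k : ℝ) + 1 + n)) * y * Nn n (ε * A * y ^ m) = 0) :=
  stmt4_general n hn k hke
end

section
/- Let n > 0 and let 0 < y1 < y2. Suppose Y is continuously differentiable on [y1, y2], twice differentiable on (y1, y2), satisfies Y''(y) = −(1/(n+3))·y·N_n(Y(y)) on (y1, y2), Y'(y1) = Y'(y2) = 0, and Y is not identically zero on [y1, y2]. Then y2·|Y(y2)|^{(n+2)/(n+1)} > y1·|Y(y1)|^{(n+2)/(n+1)}; in particular, if Y(y1) ≠ 0 then ( |Y(y2)| / |Y(y1)| )^{(n+2)/(n+1)} > y1/y2. -/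
open Set Filter Topology

theorem Nn_eq_abs_rpow_mul {n : ℝ} (hn : n + 1 ≠ 0) (x : ℝ) :
    Nn n x = |x| ^ ((n + 2) / (n + 1) - 2) * x := by
  rw [Nn]
  congr 2
  field_simp
  ring

noncomputable def energy (κ p : ℝ) (Y Y' : ℝ → ℝ) (t : ℝ) : ℝ :=
  Y' t ^ 2 / 2 + κ / p * (t * |Y t| ^ p)

section Energy

variable {κ p : ℝ} {Y Y' : ℝ → ℝ}

theorem energy_of_deriv_eq_zero {t : ℝ} (ht : Y' t = 0) :
    energy κ p Y Y' t = κ / p * (t * |Y t| ^ p) := by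
  simp [energy, ht]

theorem continuousOn_energy {s : Set ℝ} (hp : 0 ≤ p) (hY : ContinuousOn Y s)
    (hY' : ContinuousOn Y' s) : ContinuousOn (energy κ p Y Y') s := by
  unfold energy
  have hYp : ContinuousOn (fun t => |Y t| ^ p) s := hY.abs.rpow_const fun _ _ => Or.inr hp
  fun_prop

theorem hasDerivAt_energy (hp : 1 < p) {y Y'' : ℝ} (hY : HasDerivAt Y (Y' y) y)
    (hY' : HasDerivAt Y' Y'' y) (heq : Y'' = -κ * y * (|Y y| ^ (p - 2) * Y y)) :
    HasDerivAt (energy κ p Y Y') (κ / p * |Y y| ^ p) y := by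
  have hkin := (hY'.pow 2).div_const 2
  have hpot := ((hasDerivAt_id y).mul ((hasDerivAt_abs_rpow (Y y) hp).comp y hY)).const_mul (κ / p)
  refine (hkin.add hpot).congr_deriv ?_
  simp only [heq, Function.comp_apply, id]
  field_simp
  ring

end Energy

theorem lt_of_hasDerivAt_nonneg_of_exists_ne_zero {G g : ℝ → ℝ} {a b : ℝ}
    (hG : ContinuousOn G (Icc a b)) (hG' : ∀ x ∈ Ioo a b, HasDerivAt G (g x) x)
    (hg : ∀ x ∈ Ioo a b, 0 ≤ g x) (hne : ∃ x ∈ Ioo a b, g x ≠ 0) : G a < G b := by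
  obtain ⟨x, hx, hgx⟩ := hne
  have hab : a ≤ b := hx.1.le.trans hx.2.le
  have hmono : MonotoneOn G (Icc a b) :=
    monotoneOn_of_hasDerivWithinAt_nonneg (convex_Icc a b) hG
      (by rw [interior_Icc]; exact fun x hx => (hG' x hx).hasDerivWithinAt)
      (by rwa [interior_Icc])
  have hleft : a ∈ Icc a b := left_mem_Icc.2 hab
  have hright : b ∈ Icc a b := right_mem_Icc.2 hab
  refine (hmono hleft hright hab).lt_of_ne fun hGab => hgx ?_
  have hconst : G =ᶠ[𝓝 x] fun _ => G a := by
    filter_upwards [Icc_mem_nhds hx.1 hx.2] with t ht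
    exact le_antisymm (hGab ▸ hmono ht hright ht.2) (hmono hleft ht ht.1)
  exact (hG' x hx).unique (hconst.hasDerivAt_iff.2 (hasDerivAt_const x _))

theorem exists_mem_Ioo_ne_zero_of_continuousOn {Y : ℝ → ℝ} {a b : ℝ} (hab : a < b)
    (hY : ContinuousOn Y (Icc a b)) (hne : ∃ y ∈ Icc a b, Y y ≠ 0) :
    ∃ y ∈ Ioo a b, Y y ≠ 0 := by
  by_contra! h
  obtain ⟨y, hy, hYy⟩ := hne
  exact hYy (EqOn.of_subset_closure (g := 0) h hY continuousOn_const Ioo_subset_Icc_self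
    (closure_Ioo hab.ne).superset hy)

/-- A priori bound on the oscillations of the first nonlinear
eigenfunction (`k = 1`, `l = 0`): if `0 < y1 < y2` are critical points of a
C¹ solution `Y` (with derivative `Y'` and second derivative `Y''` on `(y1,y2)`)
of `Y'' = -(1/(n+3))·y·N_n(Y)`, and `Y` is not identically zero on `[y1,y2]`,
then `y2·|Y(y2)|^{(n+2)/(n+1)} > y1·|Y(y1)|^{(n+2)/(n+1)}`. -/
theorem stmt7 (n y1 y2 : ℝ) (hn : 0 < n) (hy1 : 0 < y1) (h12 : y1 < y2)
    (Y Y' Y'' : ℝ → ℝ)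
    (hY : ∀ y ∈ Set.Icc y1 y2, HasDerivWithinAt Y (Y' y) (Set.Icc y1 y2) y)
    (hY'cont : ContinuousOn Y' (Set.Icc y1 y2))
    (hY'' : ∀ y ∈ Set.Ioo y1 y2, HasDerivAt Y' (Y'' y) y)
    (heq : ∀ y ∈ Set.Ioo y1 y2, Y'' y = -(1 / (n + 3)) * y * Nn n (Y y))
    (hb1 : Y' y1 = 0) (hb2 : Y' y2 = 0)
    (hnz : ∃ y ∈ Set.Icc y1 y2, Y y ≠ 0) :
    y1 * |Y y1| ^ ((n + 2) / (n + 1)) < y2 * |Y y2| ^ ((n + 2) / (n + 1)) ∧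
    (Y y1 ≠ 0 → y1 / y2 < (|Y y2| / |Y y1|) ^ ((n + 2) / (n + 1))) := by
  set p := (n + 2) / (n + 1)
  have hp : 1 < p := by rw [lt_div_iff₀ (by linarith)]; linarith
  have hcoef : 0 < 1 / (n + 3) / p := by positivity
  have hYcont : ContinuousOn Y (Icc y1 y2) := fun y hy => (hY y hy).continuousWithinAt
  have hE' : ∀ y ∈ Ioo y1 y2,
      HasDerivAt (energy (1 / (n + 3)) p Y Y') (1 / (n + 3) / p * |Y y| ^ p) y := fun y hy =>
    hasDerivAt_energy hp ((hY y (Ioo_subset_Icc_self hy)).hasDerivAt (Icc_mem_nhds hy.1 hy.2))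
      (hY'' y hy) (by rw [heq y hy, Nn_eq_abs_rpow_mul (by linarith)])
  obtain ⟨t, ht, hYt⟩ := exists_mem_Ioo_ne_zero_of_continuousOn h12 hYcont hnz
  have hE := lt_of_hasDerivAt_nonneg_of_exists_ne_zero
    (continuousOn_energy (by linarith) hYcont hY'cont) hE' (fun y _ => by positivity)
    ⟨t, ht, by positivity⟩
  rw [energy_of_deriv_eq_zero hb1, energy_of_deriv_eq_zero hb2] at hE
  have hmain := lt_of_mul_lt_mul_left hE hcoef.le
  refine ⟨hmain, fun hY1 => ?_⟩
  rw [Real.div_rpow (abs_nonneg _) (abs_nonneg _),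
    div_lt_div_iff₀ (by linarith) (by positivity)]
  linarith
end

section
/- Let n > 0 and let 0 < y1 < y2. Suppose Y is continuously differentiable on [y1, y2], twice differentiable on (y1, y2), satisfies y·Y''(y) − Y'(y) + (1/(2n+3))·y²·N_n(Y(y)) = 0 on (y1, y2), Y'(y1) = Y'(y2) = 0, and Y is not identically zero on [y1, y2]. Then y2²·|Y(y2)|^{(n+2)/(n+1)} > y1²·|Y(y1)|^{(n+2)/(n+1)}; in particular, if Y(y1) ≠ 0 then ( |Y(y2)| / |Y(y1)| )^{(n+2)/(n+1)} > (y1/y2)². -/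
/-!
Along a solution of `y·Y'' − Y' + c·y²·g(Y) = 0` with `y > 0`, the energy
`E = Y'²/(2y) + c·G(Y)`, where `G' = g`, satisfies `E' = Y'²/(2y²) ≥ 0`. For `g = N_n` the
potential is `G(Y) = (n+1)/(n+2)·|Y|^{(n+2)/(n+1)}`. Hence at a critical
point `y2`, `c·G(Y(y2)) = E(y2) ≥ E(y) ≥ c·G(Y(y))` for every `y ∈ [y1, y2]`: `|Y|^{(n+2)/(n+1)}`
is maximal at `y2` and, as `Y` does not vanish identically, positive there; the factor `y²`
makes the inequality strict.
-/

open Set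

noncomputable def NnPotential (n x : ℝ) : ℝ := (n + 1) / (n + 2) * |x| ^ ((n + 2) / (n + 1))

section NnPotential

variable {n : ℝ}

lemma one_lt_NnPotential_exponent (hn : -1 < n) : 1 < (n + 2) / (n + 1) := by
  rw [lt_div_iff₀ (by linarith)]; linarith

lemma hasDerivAt_NnPotential (hn : -1 < n) (x : ℝ) : HasDerivAt (NnPotential n) (Nn n x) x := by
  have hn1 : n + 1 ≠ 0 := by linarith
  have hn2 : n + 2 ≠ 0 := by linarith
  refine ((hasDerivAt_abs_rpow x (one_lt_NnPotential_exponent hn)).const_mul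
    ((n + 1) / (n + 2))).congr_deriv ?_
  have hexp : (n + 2) / (n + 1) - 2 = -(n / (n + 1)) := by field_simp; ring
  rw [Nn, hexp]
  field_simp

lemma NnPotential_pos_iff (hn : -1 < n) {x : ℝ} :
    0 < NnPotential n x ↔ 0 < |x| ^ ((n + 2) / (n + 1)) :=
  mul_pos_iff_of_pos_left (div_pos (by linarith) (by linarith))

lemma NnPotential_le_iff (hn : -1 < n) {x x' : ℝ} :
    NnPotential n x ≤ NnPotential n x' ↔
      |x| ^ ((n + 2) / (n + 1)) ≤ |x'| ^ ((n + 2) / (n + 1)) :=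
  mul_le_mul_iff_right₀ (div_pos (by linarith) (by linarith))

end NnPotential

noncomputable def odeEnergy (c : ℝ) (G Y Y' : ℝ → ℝ) (y : ℝ) : ℝ :=
  Y' y ^ 2 / (2 * y) + c * G (Y y)

section Energy

variable {a b c : ℝ} {g G Y Y' Y'' : ℝ → ℝ}

lemma hasDerivAt_odeEnergy {y : ℝ} (hy : y ≠ 0) (hG : HasDerivAt G (g (Y y)) (Y y))
    (hY : HasDerivAt Y (Y' y) y) (hY' : HasDerivAt Y' (Y'' y) y)
    (heq : y * Y'' y - Y' y + c * y ^ 2 * g (Y y) = 0) :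
    HasDerivAt (odeEnergy c G Y Y') (Y' y ^ 2 / (2 * y ^ 2)) y := by
  have hkin := (hY'.pow 2).div ((hasDerivAt_id y).const_mul 2) (mul_ne_zero two_ne_zero hy)
  refine (hkin.add ((hG.comp y hY).const_mul c)).congr_deriv ?_
  have hY'' : Y'' y = (Y' y - c * y ^ 2 * g (Y y)) / y := by
    rw [eq_div_iff hy]; linarith
  simp only [hY'', id, Pi.pow_apply, Nat.cast_ofNat]
  field_simp
  ring

lemma monotoneOn_odeEnergy (ha : 0 < a) (hG : ∀ x, HasDerivAt G (g x) x)
    (hY : ∀ y ∈ Icc a b, HasDerivWithinAt Y (Y' y) (Icc a b) y)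
    (hY'cont : ContinuousOn Y' (Icc a b))
    (hY'' : ∀ y ∈ Ioo a b, HasDerivAt Y' (Y'' y) y)
    (heq : ∀ y ∈ Ioo a b, y * Y'' y - Y' y + c * y ^ 2 * g (Y y) = 0) :
    MonotoneOn (odeEnergy c G Y Y') (Icc a b) := by
  have hderiv : ∀ y ∈ Ioo a b, HasDerivAt (odeEnergy c G Y Y') (Y' y ^ 2 / (2 * y ^ 2)) y :=
    fun y hy => hasDerivAt_odeEnergy (ha.trans hy.1).ne' (hG _)
      ((hY y (Ioo_subset_Icc_self hy)).hasDerivAt (Icc_mem_nhds hy.1 hy.2)) (hY'' y hy)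
      (heq y hy)
  have hGcont : Continuous G := continuous_iff_continuousAt.2 fun x => (hG x).continuousAt
  have hcont : ContinuousOn (odeEnergy c G Y Y') (Icc a b) :=
    ((hY'cont.pow 2).div
      (continuousOn_const.mul continuousOn_id : ContinuousOn (fun y : ℝ => 2 * y) _)
      fun y hy => mul_ne_zero two_ne_zero (ha.trans_le hy.1).ne').add
    (continuousOn_const.mul
      (hGcont.comp_continuousOn fun y hy => (hY y hy).continuousWithinAt))
  refine monotoneOn_of_deriv_nonneg (convex_Icc a b) hcont ?_ ?_ <;> rw [interior_Icc]
  · exact fun y hy => (hderiv y hy).differentiableAt.differentiableWithinAt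
  · intro y hy
    rw [(hderiv y hy).deriv]
    positivity

lemma potential_le_at_critical_point (ha : 0 < a) (hc : 0 < c) (hG : ∀ x, HasDerivAt G (g x) x)
    (hY : ∀ y ∈ Icc a b, HasDerivWithinAt Y (Y' y) (Icc a b) y)
    (hY'cont : ContinuousOn Y' (Icc a b))
    (hY'' : ∀ y ∈ Ioo a b, HasDerivAt Y' (Y'' y) y)
    (heq : ∀ y ∈ Ioo a b, y * Y'' y - Y' y + c * y ^ 2 * g (Y y) = 0)
    (hb : Y' b = 0) : ∀ z ∈ Icc a b, G (Y z) ≤ G (Y b) := by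
  intro z hz
  have hE := monotoneOn_odeEnergy ha hG hY hY'cont hY'' heq hz
    (right_mem_Icc.2 (hz.1.trans hz.2)) hz.2
  have hkin : 0 ≤ Y' z ^ 2 / (2 * z) := by have := ha.trans_le hz.1; positivity
  simp only [odeEnergy, hb, zero_pow two_ne_zero, zero_div, zero_add] at hE
  exact le_of_mul_le_mul_left (by linarith) hc

end Energy

theorem stmt8_general (n y1 y2 : ℝ) (hn : 0 < n) (hy1 : 0 < y1) (h12 : y1 < y2)
    (Y Y' Y'' : ℝ → ℝ)
    (hY : ∀ y ∈ Set.Icc y1 y2, HasDerivWithinAt Y (Y' y) (Set.Icc y1 y2) y)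
    (hY'cont : ContinuousOn Y' (Set.Icc y1 y2))
    (hY'' : ∀ y ∈ Set.Ioo y1 y2, HasDerivAt Y' (Y'' y) y)
    (heq : ∀ y ∈ Set.Ioo y1 y2,
      y * Y'' y - Y' y + (1 / (2 * n + 3)) * y ^ 2 * Nn n (Y y) = 0)
    (hb2 : Y' y2 = 0)
    (hnz : ∃ y ∈ Set.Icc y1 y2, Y y ≠ 0) :
    y1 ^ 2 * |Y y1| ^ ((n + 2) / (n + 1)) < y2 ^ 2 * |Y y2| ^ ((n + 2) / (n + 1)) ∧
    (Y y1 ≠ 0 → (y1 / y2) ^ 2 < (|Y y2| / |Y y1|) ^ ((n + 2) / (n + 1))) := by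
  have hn' : -1 < n := by linarith
  have hle := potential_le_at_critical_point hy1 (by positivity)
    (hasDerivAt_NnPotential hn') hY hY'cont hY'' heq hb2
  have hle1 := (NnPotential_le_iff hn').1 (hle y1 (left_mem_Icc.2 h12.le))
  obtain ⟨z, hz, hYz⟩ := hnz
  have hpos : 0 < |Y y2| ^ ((n + 2) / (n + 1)) := (NnPotential_pos_iff hn').1 <|
    (NnPotential_pos_iff hn').2 (Real.rpow_pos_of_pos (abs_pos.2 hYz) _) |>.trans_le (hle z hz)
  have hsq : y1 ^ 2 < y2 ^ 2 := by nlinarith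
  have hmain : y1 ^ 2 * |Y y1| ^ ((n + 2) / (n + 1)) < y2 ^ 2 * |Y y2| ^ ((n + 2) / (n + 1)) :=
    (mul_le_mul_of_nonneg_left hle1 (sq_nonneg y1)).trans_lt
      (mul_lt_mul_of_pos_right hsq hpos)
  refine ⟨hmain, fun hY1 => ?_⟩
  have hpos1 : 0 < |Y y1| ^ ((n + 2) / (n + 1)) := Real.rpow_pos_of_pos (abs_pos.2 hY1) _
  rw [div_pow, Real.div_rpow (abs_nonneg _) (abs_nonneg _),
    div_lt_div_iff₀ (pow_pos (hy1.trans h12) 2) hpos1]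
  linarith

/-- A priori bound on the oscillations of the second nonlinear
eigenfunction (`k = 1`, `l = 1`): if `0 < y1 < y2` are critical points of a
C¹ solution `Y` of `y·Y'' - Y' + (1/(2n+3))·y²·N_n(Y) = 0` on `(y1,y2)`,
not identically zero on `[y1,y2]`, then
`y2²·|Y(y2)|^{(n+2)/(n+1)} > y1²·|Y(y1)|^{(n+2)/(n+1)}`. -/
theorem stmt8 (n y1 y2 : ℝ) (hn : 0 < n) (hy1 : 0 < y1) (h12 : y1 < y2)
    (Y Y' Y'' : ℝ → ℝ)
    (hY : ∀ y ∈ Set.Icc y1 y2, HasDerivWithinAt Y (Y' y) (Set.Icc y1 y2) y)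
    (hY'cont : ContinuousOn Y' (Set.Icc y1 y2))
    (hY'' : ∀ y ∈ Set.Ioo y1 y2, HasDerivAt Y' (Y'' y) y)
    (heq : ∀ y ∈ Set.Ioo y1 y2,
      y * Y'' y - Y' y + (1 / (2 * n + 3)) * y ^ 2 * Nn n (Y y) = 0)
    (hb1 : Y' y1 = 0) (hb2 : Y' y2 = 0)
    (hnz : ∃ y ∈ Set.Icc y1 y2, Y y ≠ 0) :
    y1 ^ 2 * |Y y1| ^ ((n + 2) / (n + 1)) < y2 ^ 2 * |Y y2| ^ ((n + 2) / (n + 1)) ∧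
    (Y y1 ≠ 0 → (y1 / y2) ^ 2 < (|Y y2| / |Y y1|) ^ ((n + 2) / (n + 1))) :=
  stmt8_general n y1 y2 hn hy1 h12 Y Y' Y'' hY hY'cont hY'' heq hb2 hnz
end

section
/- Consider continuously differentiable functions f : [−1, ∞) → ℝ with the following properties: f(−1) = 0 and f'(−1) = 0; f > 0 on some right-neighbourhood of −1; the zero set { y > −1 : f(y) = 0 } is discrete (all zeros isolated); and at every y > −1 with f(y) ≠ 0, f is twice differentiable with f''(y) = −sign(f(y))·y. Then such a function f exists and is unique, it changes sign at each of its zeros, and its zeros in (−1, ∞), listed in increasing order y_1 < y_2 < y_3 < ⋯, form an infinite sequence satisfying y_1 = 2, y_2 = 3√2 − 1, and y_{i+1} = ( √(17·y_i² − 4·y_i·y_{i−1} − 4·y_{i−1}²) − y_i ) / 2 for every i ≥ 2. -/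
/-- A solution of the limit (`n = +∞`) problem for the first nonlinear
eigenfunction (`k = 1`, `l = 0`): a C¹ function on `[-1, ∞)` with
`f(-1) = f'(-1) = 0`, positive on a right-neighbourhood of `-1`, whose zeros in
`(-1, ∞)` are isolated, and which satisfies `f'' = -sign(f)·y` wherever
`f ≠ 0` (solutions being glued in a C¹ fashion across zeros). -/
def IsLimitSol (f : ℝ → ℝ) : Prop :=
  ContDiffOn ℝ 1 f (Set.Ici (-1 : ℝ)) ∧
  f (-1) = 0 ∧
  derivWithin f (Set.Ici (-1 : ℝ)) (-1) = 0 ∧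
  (∃ δ > 0, ∀ y ∈ Set.Ioo (-1 : ℝ) (-1 + δ), 0 < f y) ∧
  (∀ y : ℝ, -1 < y → f y = 0 →
    ∃ δ > 0, ∀ z ∈ Set.Ioo (y - δ) (y + δ), z ≠ y → f z ≠ 0) ∧
  (∀ y : ℝ, -1 < y → f y ≠ 0 →
    DifferentiableAt ℝ (deriv f) y ∧
    deriv (deriv f) y = -(Real.sign (f y)) * y)

open Set

set_option linter.unusedVariables false

noncomputable def Yseq : ℕ → ℝ
  | 0 => -1
  | 1 => 2
  | (n+2) => (Real.sqrt (17 * Yseq (n+1) ^ 2 - 4 * Yseq (n+1) * Yseq n - 4 * Yseq n ^ 2)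
      - Yseq (n+1)) / 2

lemma Yseq0 : Yseq 0 = -1 := rfl
lemma Yseq1 : Yseq 1 = 2 := rfl
lemma Yseq_rec (n : ℕ) : Yseq (n+2) = (Real.sqrt (17 * Yseq (n+1) ^ 2 - 4 * Yseq (n+1) * Yseq n - 4 * Yseq n ^ 2)
      - Yseq (n+1)) / 2 := rfl

section step
variable {p q : ℝ} (h1 : -1 ≤ p) (h2 : 2 ≤ q) (h3 : p < q)

include h1 h2 h3

lemma disc_pos : (3*q)^2 < 17 * q ^ 2 - 4 * q * p - 4 * p ^ 2 := by nlinarith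

lemma sqrt_disc_gt : 3*q < Real.sqrt (17 * q ^ 2 - 4 * q * p - 4 * p ^ 2) := by
  have h := disc_pos h1 h2 h3
  nlinarith [Real.sq_sqrt (by nlinarith : (0:ℝ) ≤ 17 * q ^ 2 - 4 * q * p - 4 * p ^ 2),
    Real.sqrt_nonneg (17 * q ^ 2 - 4 * q * p - 4 * p ^ 2)]

lemma step_lt : q < (Real.sqrt (17 * q ^ 2 - 4 * q * p - 4 * p ^ 2) - q) / 2 := by
  have := sqrt_disc_gt h1 h2 h3; linarith

lemma step_key :
    ((Real.sqrt (17 * q ^ 2 - 4 * q * p - 4 * p ^ 2) - q) / 2 - q)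
      * ((Real.sqrt (17 * q ^ 2 - 4 * q * p - 4 * p ^ 2) - q) / 2 + 2*q)
    = (q - p) * (2*q + p) := by
  have h := Real.sq_sqrt (by nlinarith : (0:ℝ) ≤ 17 * q ^ 2 - 4 * q * p - 4 * p ^ 2)
  nlinarith [h]

end step

lemma Yseq_prop : ∀ n, -1 ≤ Yseq n ∧ 2 ≤ Yseq (n+1) ∧ Yseq n < Yseq (n+1) := by
  intro n
  induction n using Nat.strong_induction_on with
  | _ n ih =>
    match n with
    | 0 => refine ⟨le_refl _, le_refl _, by norm_num [Yseq0, Yseq1]⟩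
    | (m+1) =>
      obtain ⟨hm1, hm2, hm3⟩ := ih m (by omega)
      have hlt := step_lt hm1 hm2 hm3
      rw [Yseq_rec]
      exact ⟨by linarith, by linarith, by linarith⟩

lemma Yseq_mono : StrictMono Yseq :=
  strictMono_nat_of_lt_succ fun n => (Yseq_prop n).2.2

lemma Yseq_key (n : ℕ) :
    (Yseq (n+2) - Yseq (n+1)) * (Yseq (n+2) + 2 * Yseq (n+1))
    = (Yseq (n+1) - Yseq n) * (2 * Yseq (n+1) + Yseq n) := by
  obtain ⟨h1, h2, h3⟩ := Yseq_prop n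
  rw [Yseq_rec]
  exact step_key h1 h2 h3

-- growth: D n := (Yseq (n+1) - Yseq n) * (2*Yseq (n+1) + Yseq n) ≥ 9
lemma Yseq_D_ge (n : ℕ) : 9 ≤ (Yseq (n+1) - Yseq n) * (2 * Yseq (n+1) + Yseq n) := by
  induction n with
  | zero => norm_num [Yseq0, Yseq1]
  | succ m ih =>
    have hk := Yseq_key m
    obtain ⟨h1, h2, h3⟩ := Yseq_prop (m+1)
    nlinarith [h3, sub_nonneg.2 h3.le]

lemma Yseq_sq_ge (n : ℕ) : 4 + 3 * (n : ℝ) ≤ (Yseq (n+1))^2 := by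
  induction n with
  | zero => norm_num [Yseq1]
  | succ m ih =>
    obtain ⟨h1, h2, h3⟩ := Yseq_prop (m+1)
    obtain ⟨g1, g2, g3⟩ := Yseq_prop m
    have hD := Yseq_D_ge (m+1)
    have : 3 ≤ Yseq (m+2) * (Yseq (m+2) - Yseq (m+1)) := by nlinarith
    push_cast
    nlinarith

lemma Yseq_unbounded (x : ℝ) : ∃ n, x < Yseq (n+1) := by
  obtain ⟨n, hn⟩ := exists_nat_gt (x^2)
  refine ⟨n, ?_⟩
  have h := Yseq_sq_ge n
  obtain ⟨h1, h2, h3⟩ := Yseq_prop n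
  nlinarith [sq_nonneg x, abs_nonneg x, sq_abs x, le_abs_self x]

noncomputable def sgn (n : ℕ) : ℝ := (-1)^n

noncomputable def P (n : ℕ) (x : ℝ) : ℝ :=
  -(sgn n)/6 * ((x - Yseq n) * (x - Yseq (n+1)) * (x + Yseq n + Yseq (n+1)))

noncomputable def Pd (n : ℕ) (x : ℝ) : ℝ :=
  -(sgn n)/6 * (((x - Yseq n) + (x - Yseq (n+1))) * (x + Yseq n + Yseq (n+1))
    + (x - Yseq n) * (x - Yseq (n+1)))

lemma sgn_sq (n : ℕ) : sgn n * sgn n = 1 := by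
  simp [sgn, ← pow_add]

lemma sgn_succ (n : ℕ) : sgn (n+1) = -(sgn n) := by simp [sgn, pow_succ]

lemma P_hasDeriv (n : ℕ) (x : ℝ) : HasDerivAt (P n) (Pd n x) x := by
  have h1 : HasDerivAt (fun x : ℝ => (x - Yseq n) * (x - Yseq (n+1)) * (x + Yseq n + Yseq (n+1)))
      (((x - Yseq n) + (x - Yseq (n+1))) * (x + Yseq n + Yseq (n+1))
    + (x - Yseq n) * (x - Yseq (n+1))) x := by
    have ha : HasDerivAt (fun x : ℝ => x - Yseq n) 1 x := (hasDerivAt_id x).sub_const _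
    have hb : HasDerivAt (fun x : ℝ => x - Yseq (n+1)) 1 x := (hasDerivAt_id x).sub_const _
    have hc : HasDerivAt (fun x : ℝ => x + Yseq n + Yseq (n+1)) 1 x :=
      ((hasDerivAt_id x).add_const _).add_const _
    have := (ha.mul hb).mul hc
    exact this.congr_deriv (by simp only [Pi.mul_apply, Pi.add_apply]; ring)
  have := h1.const_mul (-(sgn n)/6)
  exact this

lemma Pd_hasDeriv (n : ℕ) (x : ℝ) : HasDerivAt (Pd n) (-(sgn n) * x) x := by
  have h1 : HasDerivAt (fun x : ℝ => ((x - Yseq n) + (x - Yseq (n+1))) * (x + Yseq n + Yseq (n+1))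
    + (x - Yseq n) * (x - Yseq (n+1))) (6 * x) x := by
    have ha : HasDerivAt (fun x : ℝ => x - Yseq n) 1 x := (hasDerivAt_id x).sub_const _
    have hb : HasDerivAt (fun x : ℝ => x - Yseq (n+1)) 1 x := (hasDerivAt_id x).sub_const _
    have hc : HasDerivAt (fun x : ℝ => x + Yseq n + Yseq (n+1)) 1 x :=
      ((hasDerivAt_id x).add_const _).add_const _
    have := ((ha.add hb).mul hc).add (ha.mul hb)
    exact this.congr_deriv (by simp only [Pi.mul_apply, Pi.add_apply]; ring)
  have := h1.const_mul (-(sgn n)/6)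
  have h2 : -(sgn n)/6 * (6 * x) = -(sgn n) * x := by ring
  rw [← h2]
  exact this

lemma P_contDiff (n : ℕ) : ContDiff ℝ (⊤ : ℕ∞) (P n) := by
  unfold P
  fun_prop

lemma Pd_contDiff (n : ℕ) : ContDiff ℝ (⊤ : ℕ∞) (Pd n) := by
  unfold Pd
  fun_prop

lemma P_root_left (n : ℕ) : P n (Yseq n) = 0 := by simp [P]
lemma P_root_right (n : ℕ) : P n (Yseq (n+1)) = 0 := by simp [P]

lemma Pd_match (n : ℕ) : Pd (n+1) (Yseq (n+1)) = Pd n (Yseq (n+1)) := by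
  have hk := Yseq_key n
  have hs := sgn_succ n
  simp only [Pd, hs]
  linear_combination (-(sgn n)/6) * hk

lemma P_sign {n : ℕ} {x : ℝ} (hx : x ∈ Ioo (Yseq n) (Yseq (n+1))) :
    0 < sgn n * P n x := by
  obtain ⟨h1, h2, h3⟩ := Yseq_prop n
  obtain ⟨hx1, hx2⟩ := hx
  have hsum : 0 < x + Yseq n + Yseq (n+1) := by linarith
  have : sgn n * P n x = -1/6 * ((x - Yseq n) * (x - Yseq (n+1)) * (x + Yseq n + Yseq (n+1))) := by
    unfold P
    linear_combination (-((x - Yseq n) * (x - Yseq (n+1)) * (x + Yseq n + Yseq (n+1)))/6) * sgn_sq n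
  rw [this]
  have : (x - Yseq n) * (x - Yseq (n+1)) * (x + Yseq n + Yseq (n+1)) < 0 := by
    apply mul_neg_of_neg_of_pos _ hsum
    exact mul_neg_of_pos_of_neg (by linarith) (by linarith)
  linarith

noncomputable def Nidx (x : ℝ) : ℕ := Nat.find (Yseq_unbounded x)
noncomputable def F (x : ℝ) : ℝ := P (Nidx x) x
noncomputable def Fd (x : ℝ) : ℝ := Pd (Nidx x) x

lemma Nidx_lt (x : ℝ) : x < Yseq (Nidx x + 1) :=
  show x < Yseq (Nat.find (Yseq_unbounded x) + 1) from Nat.find_spec (Yseq_unbounded x)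

lemma Nidx_eq {n : ℕ} {x : ℝ} (h1 : Yseq n ≤ x) (h2 : x < Yseq (n+1)) : Nidx x = n := by
  rw [Nidx, Nat.find_eq_iff]
  refine ⟨h2, fun m hm => not_lt.2 (le_trans ?_ h1)⟩
  exact Yseq_mono.monotone (by omega)

lemma Nidx_zero {x : ℝ} (h : x < Yseq 1) : Nidx x = 0 := by
  rw [Nidx, Nat.find_eq_zero]; exact h

lemma Nidx_le {x : ℝ} (hx : -1 ≤ x) : Yseq (Nidx x) ≤ x := by
  rcases h : Nidx x with _ | m
  · exact hx
  · have h2 := Nat.find_min (Yseq_unbounded x) (show m < Nidx x by omega)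
    exact not_lt.1 h2

lemma F_eqOn (n : ℕ) : EqOn F (P n) (Ico (Yseq n) (Yseq (n+1))) := fun x hx => by
  rw [F, Nidx_eq hx.1 hx.2]

lemma F_eqOn_Iio : EqOn F (P 0) (Iio (Yseq 1)) := fun x hx => by
  rw [F, Nidx_zero hx]

lemma F_zero (n : ℕ) : F (Yseq (n+1)) = 0 := by
  rw [F_eqOn (n+1) ⟨le_refl _, (Yseq_prop (n+1)).2.2⟩, P_root_left]

lemma F_junction_left (n : ℕ) : EqOn F (P n) (Icc (Yseq n) (Yseq (n+1))) := by
  intro z hz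
  rcases eq_or_lt_of_le hz.2 with h | h
  · rw [h, F_zero, P_root_right]
  · exact F_eqOn n ⟨hz.1, h⟩

lemma F_hasDeriv (x : ℝ) : HasDerivAt F (Fd x) x := by
  rcases lt_or_ge x (Yseq 1) with hx | hx
  · have hN : Nidx x = 0 := Nidx_zero hx
    have : F =ᶠ[nhds x] P 0 :=
      Filter.eventuallyEq_of_mem (Iio_mem_nhds hx) F_eqOn_Iio
    rw [Fd, hN]
    exact (P_hasDeriv 0 x).congr_of_eventuallyEq this
  · -- x ≥ Yseq 1, so Nidx x = n+1 for some n
    rcases hNx : Nidx x with _ | n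
    · exfalso; exact absurd (Nidx_lt x) (by rw [hNx]; exact not_lt.2 hx)
    have hx1 : Yseq (n+1) ≤ x := by have := Nidx_le (le_trans (by rw [show Yseq 1 = (2:ℝ) from rfl]; norm_num) hx); rwa [hNx] at this
    have hx2 : x < Yseq (n+2) := by have := Nidx_lt x; rwa [hNx] at this
    rcases eq_or_lt_of_le hx1 with heq | hlt
    · -- junction point x = Yseq (n+1)
      subst heq
      rw [Fd, hNx]
      have hleft : HasDerivWithinAt F (Pd (n+1) (Yseq (n+1))) (Iic (Yseq (n+1))) (Yseq (n+1)) := by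
        rw [Pd_match n]
        refine ((P_hasDeriv n _).hasDerivWithinAt).congr_of_eventuallyEq ?_ ?_
        · filter_upwards [inter_mem_nhdsWithin (Iic (Yseq (n+1)))
            (Ioi_mem_nhds (Yseq_prop n).2.2)] with z hz
          exact F_junction_left n ⟨hz.2.le, hz.1⟩
        · rw [F_zero, P_root_right]
      have hright : HasDerivWithinAt F (Pd (n+1) (Yseq (n+1))) (Ici (Yseq (n+1))) (Yseq (n+1)) := by
        refine ((P_hasDeriv (n+1) _).hasDerivWithinAt).congr_of_eventuallyEq ?_ ?_
        · filter_upwards [inter_mem_nhdsWithin (Ici (Yseq (n+1)))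
            (Iio_mem_nhds (Yseq_prop (n+1)).2.2)] with z hz
          exact F_eqOn (n+1) ⟨hz.1, hz.2⟩
        · rw [F_zero, P_root_left]
      have := hleft.union hright
      rwa [Iic_union_Ici, hasDerivWithinAt_univ] at this
    · -- interior point
      rw [Fd, hNx]
      have : F =ᶠ[nhds x] P (n+1) :=
        Filter.eventuallyEq_of_mem (Ioo_mem_nhds hlt hx2)
          (fun z hz => F_eqOn (n+1) ⟨hz.1.le, hz.2⟩)
      exact (P_hasDeriv (n+1) x).congr_of_eventuallyEq this

lemma F_deriv : deriv F = Fd := funext fun x => (F_hasDeriv x).deriv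

lemma Fd_cont : Continuous Fd := by
  rw [continuous_iff_continuousAt]
  intro x
  rcases lt_or_ge x (Yseq 1) with hx | hx
  · have : Fd =ᶠ[nhds x] Pd 0 :=
      Filter.eventuallyEq_of_mem (Iio_mem_nhds hx) (fun z hz => by rw [Fd, Nidx_zero hz])
    exact ((Pd_contDiff 0).continuous.continuousAt).congr this.symm
  · rcases hNx : Nidx x with _ | n
    · exfalso; exact absurd (Nidx_lt x) (by rw [hNx]; exact not_lt.2 hx)
    have hx1 : Yseq (n+1) ≤ x := by have := Nidx_le (le_trans (by rw [show Yseq 1 = (2:ℝ) from rfl]; norm_num) hx); rwa [hNx] at this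
    have hx2 : x < Yseq (n+2) := by have := Nidx_lt x; rwa [hNx] at this
    rcases eq_or_lt_of_le hx1 with heq | hlt
    · subst heq
      rw [continuousAt_iff_continuous_left'_right']
      constructor
      · refine (((Pd_contDiff n).continuous.continuousAt).continuousWithinAt).congr_of_eventuallyEq
          ?_ ?_
        · filter_upwards [inter_mem_nhdsWithin (Iio (Yseq (n+1)))
            (Ioi_mem_nhds (Yseq_prop n).2.2)] with z hz
          rw [Fd, Nidx_eq hz.2.le hz.1]
        · rw [Fd, Nidx_eq (le_refl _) (Yseq_prop (n+1)).2.2, Pd_match]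
      · refine (((Pd_contDiff (n+1)).continuous.continuousAt).continuousWithinAt).congr_of_eventuallyEq
          ?_ ?_
        · filter_upwards [inter_mem_nhdsWithin (Ioi (Yseq (n+1)))
            (Iio_mem_nhds (Yseq_prop (n+1)).2.2)] with z hz
          rw [Fd, Nidx_eq hz.1.le hz.2]
        · rw [Fd, Nidx_eq (le_refl _) (Yseq_prop (n+1)).2.2]
    · have : Fd =ᶠ[nhds x] Pd (n+1) :=
        Filter.eventuallyEq_of_mem (Ioo_mem_nhds hlt hx2)
          (fun z hz => by rw [Fd, Nidx_eq hz.1.le hz.2])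
      exact ((Pd_contDiff (n+1)).continuous.continuousAt).congr this.symm

lemma F_contDiff : ContDiff ℝ 1 F :=
  contDiff_one_iff_deriv.2 ⟨fun x => (F_hasDeriv x).differentiableAt,
    by rw [F_deriv]; exact Fd_cont⟩

lemma Yseq1_lt : (-1:ℝ) < Yseq 1 := by rw [show Yseq 1 = (2:ℝ) from rfl]; norm_num

lemma sgn_cases (n : ℕ) : sgn n = 1 ∨ sgn n = -1 := by
  rcases Nat.even_or_odd n with h | h
  · left; simp [sgn, h.neg_one_pow]
  · right; simp [sgn, h.neg_one_pow]

lemma P_ne_zero {n : ℕ} {x : ℝ} (hx : x ∈ Ioo (Yseq n) (Yseq (n+1))) : P n x ≠ 0 := by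
  have := P_sign hx
  intro h; rw [h, mul_zero] at this; exact lt_irrefl _ this

lemma sign_P {n : ℕ} {x : ℝ} (hx : x ∈ Ioo (Yseq n) (Yseq (n+1))) :
    Real.sign (P n x) = sgn n := by
  have hs := P_sign hx
  rcases sgn_cases n with h | h
  · rw [h] at hs ⊢; rw [one_mul] at hs; exact Real.sign_of_pos hs
  · rw [h] at hs ⊢; rw [neg_one_mul, neg_pos] at hs; exact Real.sign_of_neg hs

lemma IsLimitSol_F : IsLimitSol F := by
  refine ⟨F_contDiff.contDiffOn, ?_, ?_, ?_, ?_, ?_⟩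
  · rw [F_eqOn_Iio (show (-1:ℝ) < Yseq 1 from Yseq1_lt),
      show (-1:ℝ) = Yseq 0 from rfl, P_root_left]
  · rw [(F_hasDeriv (-1)).hasDerivWithinAt.derivWithin
      ((uniqueDiffOn_Ici (-1)) _ Set.self_mem_Ici)]
    rw [Fd, Nidx_zero Yseq1_lt]
    simp [Pd, show Yseq 0 = (-1:ℝ) from rfl, show Yseq 1 = (2:ℝ) from rfl]
    norm_num
  · refine ⟨3, by norm_num, fun z hz => ?_⟩
    have h2 : z ∈ Ioo (Yseq 0) (Yseq 1) := by
      rw [show Yseq 0 = (-1:ℝ) from rfl, show Yseq 1 = (2:ℝ) from rfl]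
      constructor
      · exact hz.1
      · have := hz.2; linarith
    rw [F_eqOn 0 ⟨h2.1.le, h2.2⟩]
    have := P_sign h2
    simpa [sgn] using this
  · intro y hy hy0
    have hyIci : (-1:ℝ) ≤ y := hy.le
    have hm1 : Yseq (Nidx y) ≤ y := Nidx_le hyIci
    have hm2 : y < Yseq (Nidx y + 1) := Nidx_lt y
    have hF : F y = P (Nidx y) y := F_eqOn _ ⟨hm1, hm2⟩
    have heq : y = Yseq (Nidx y) := by
      by_contra h
      exact P_ne_zero ⟨lt_of_le_of_ne hm1 (Ne.symm h), hm2⟩ (hF ▸ hy0)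
    rcases hN : Nidx y with _ | m
    · exfalso; rw [hN] at heq; rw [heq] at hy; exact lt_irrefl _ hy
    rw [hN] at heq
    obtain ⟨_, _, hg1⟩ := Yseq_prop m
    obtain ⟨_, _, hg2⟩ := Yseq_prop (m+1)
    refine ⟨min (Yseq (m+1) - Yseq m) (Yseq (m+2) - Yseq (m+1)),
      lt_min (by linarith) (by linarith), fun z hz hzne => ?_⟩
    rcases lt_or_gt_of_ne hzne with h | h
    · have hz1 : Yseq m < z := by
        have := hz.1; have := min_le_left (Yseq (m+1) - Yseq m) (Yseq (m+2) - Yseq (m+1))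
        rw [heq] at *; linarith
      have hz2 : z < Yseq (m+1) := heq ▸ h
      rw [F_eqOn m ⟨hz1.le, hz2⟩]
      exact P_ne_zero ⟨hz1, hz2⟩
    · have hz1 : Yseq (m+1) < z := heq ▸ h
      have hz2 : z < Yseq (m+2) := by
        have := hz.2; have := min_le_right (Yseq (m+1) - Yseq m) (Yseq (m+2) - Yseq (m+1))
        rw [heq] at *; linarith
      rw [F_eqOn (m+1) ⟨hz1.le, hz2⟩]
      exact P_ne_zero ⟨hz1, hz2⟩
  · intro y hy hy0
    set n := Nidx y with hn
    have hm1 : Yseq n ≤ y := Nidx_le hy.le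
    have hm2 : y < Yseq (n + 1) := Nidx_lt y
    have hF : F y = P n y := F_eqOn _ ⟨hm1, hm2⟩
    have hyo : y ∈ Ioo (Yseq n) (Yseq (n + 1)) := by
      refine ⟨lt_of_le_of_ne hm1 ?_, hm2⟩
      intro h
      exact hy0 (by rw [hF, ← h]; exact P_root_left n)
    have hev : Fd =ᶠ[nhds y] Pd n :=
      Filter.eventuallyEq_of_mem (Ioo_mem_nhds hyo.1 hyo.2)
        (fun z hz => by rw [Fd, Nidx_eq hz.1.le hz.2])
    have hder : HasDerivAt Fd (-(sgn n) * y) y :=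
      (Pd_hasDeriv n y).congr_of_eventuallyEq hev
    rw [F_deriv]
    refine ⟨hder.differentiableAt, ?_⟩
    rw [hder.deriv, hF, sign_P hyo]

-- sign of derivative at the left endpoint of each piece (n ≥ 1)
lemma Pd_left_sign (n : ℕ) : 0 < sgn (n+1) * Pd (n+1) (Yseq (n+1)) := by
  obtain ⟨h1, h2, h3⟩ := Yseq_prop (n+1)
  have hq : (2:ℝ) ≤ Yseq (n+1) := (Yseq_prop n).2.1
  have hval : sgn (n+1) * Pd (n+1) (Yseq (n+1))
      = 1/6 * ((Yseq (n+2) - Yseq (n+1)) * (2 * Yseq (n+1) + Yseq (n+2))) := by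
    unfold Pd
    linear_combination (-(((Yseq (n+1) - Yseq (n+1)) + (Yseq (n+1) - Yseq (n+2)))
      * (Yseq (n+1) + Yseq (n+1) + Yseq (n+2))
      + (Yseq (n+1) - Yseq (n+1)) * (Yseq (n+1) - Yseq (n+2)))/6) * sgn_sq (n+1)
  rw [hval]
  have : 0 < (Yseq (n+2) - Yseq (n+1)) * (2 * Yseq (n+1) + Yseq (n+2)) :=
    mul_pos (by linarith) (by linarith)
  linarith

lemma Pd0_neg_one : Pd 0 (-1) = 0 := by
  simp [Pd, show Yseq 0 = (-1:ℝ) from rfl, show Yseq 1 = (2:ℝ) from rfl]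
  norm_num

lemma sign_eq_sgn {n : ℕ} {v : ℝ} (h : 0 < sgn n * v) : Real.sign v = sgn n := by
  rcases sgn_cases n with hs | hs
  · rw [hs] at h ⊢; rw [one_mul] at h; exact Real.sign_of_pos h
  · rw [hs] at h ⊢; rw [neg_one_mul, neg_pos] at h; exact Real.sign_of_neg h

section uniq

variable {g : ℝ → ℝ} (hg : IsLimitSol g)

include hg

lemma g_cont : ContinuousOn g (Ici (-1)) := hg.1.continuousOn

lemma W_cont : ContinuousOn (derivWithin g (Ici (-1:ℝ))) (Ici (-1)) :=
  hg.1.continuousOn_derivWithin (uniqueDiffOn_Ici _) le_rfl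

lemma g_hasDeriv {x : ℝ} (hx : -1 ≤ x) :
    HasDerivWithinAt g (derivWithin g (Ici (-1:ℝ)) x) (Ici (-1)) x :=
  (hg.1.differentiableOn one_ne_zero x hx).hasDerivWithinAt

omit hg in
lemma W_eq_deriv {x : ℝ} (hx : -1 < x) : derivWithin g (Ici (-1:ℝ)) x = deriv g x :=
  derivWithin_of_mem_nhds (Ici_mem_nhds hx)

lemma W_hasDeriv {x : ℝ} (hx : -1 < x) (hgx : g x ≠ 0) :
    HasDerivAt (derivWithin g (Ici (-1:ℝ))) (-(Real.sign (g x)) * x) x := by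
  have h := hg.2.2.2.2.2 x hx hgx
  have hev : derivWithin g (Ici (-1:ℝ)) =ᶠ[nhds x] deriv g :=
    Filter.eventuallyEq_of_mem (Ioi_mem_nhds hx)
      (fun z hz => derivWithin_of_mem_nhds (Ici_mem_nhds hz))
  have h2 : HasDerivAt (deriv g) (-(Real.sign (g x)) * x) x := by
    have := h.1.hasDerivAt
    rwa [h.2] at this
  exact h2.congr_of_eventuallyEq hev

lemma piece_uniq (n : ℕ) {t : ℝ} (ht : Yseq n < t) (ht' : t ≤ Yseq (n+1))
    (hga : g (Yseq n) = 0)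
    (hwa : derivWithin g (Ici (-1:ℝ)) (Yseq n) = Pd n (Yseq n))
    (hsgn : ∀ x ∈ Ioo (Yseq n) t, 0 < sgn n * g x) :
    EqOn g (P n) (Icc (Yseq n) t) := by
  set a := Yseq n with ha
  set WW := derivWithin g (Ici (-1:ℝ)) with hWW
  have haI : (-1:ℝ) ≤ a := (Yseq_prop n).1
  -- Step 1: WW = Pd n on Ioo a t
  have step1 : ∀ x ∈ Ioo a t, WW x = Pd n x := by
    intro x hx
    have hconst : ∀ a' ∈ Ioo a x, WW x - Pd n x = WW a' - Pd n a' := by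
      intro a' ha'
      have h1 : ∀ z ∈ Icc a' x, (fun z => WW z - Pd n z) z = (fun z => WW z - Pd n z) a' := by
        apply constant_of_has_deriv_right_zero
        · apply ContinuousOn.sub
          · exact (W_cont hg).mono (fun z hz => le_trans (by linarith [ha'.1]) hz.1)
          · exact (Pd_contDiff n).continuous.continuousOn
        · intro z hz
          have hzo : z ∈ Ioo a t := ⟨lt_of_lt_of_le ha'.1 hz.1, lt_of_le_of_lt hz.2.le hx.2⟩
          have hzpos := hsgn z hzo
          have hgz : g z ≠ 0 := fun h => by rw [h, mul_zero] at hzpos; exact lt_irrefl _ hzpos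
          have hz1 : (-1:ℝ) < z := lt_of_le_of_lt haI hzo.1
          have hW := W_hasDeriv hg hz1 hgz
          rw [sign_eq_sgn hzpos] at hW
          have hP := Pd_hasDeriv n z
          have h0 : HasDerivAt (fun z => WW z - Pd n z) 0 z := by
            exact (hW.sub hP).congr_deriv (by ring)
          exact h0.hasDerivWithinAt
      exact (h1 x ⟨ha'.2.le, le_rfl⟩)
    have hsub : Ioo a x ⊆ Ici (-1:ℝ) := fun z hz => le_trans haI hz.1.le
    have hlim1 : Filter.Tendsto (fun a' => WW a' - Pd n a') (nhdsWithin a (Ioo a x))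
        (nhds (WW a - Pd n a)) :=
      (((W_cont hg) a haI).mono hsub).sub
        ((Pd_contDiff n).continuous.continuousAt.continuousWithinAt)
    have hlim2 : Filter.Tendsto (fun a' => WW a' - Pd n a') (nhdsWithin a (Ioo a x))
        (nhds (WW x - Pd n x)) := by
      apply Filter.Tendsto.congr' _ (tendsto_const_nhds (x := WW x - Pd n x))
      filter_upwards [self_mem_nhdsWithin] with a' ha'
      exact hconst a' ha'
    haveI hne : (nhdsWithin a (Ioo a x)).NeBot := by
      rw [nhdsWithin_Ioo_eq_nhdsGT hx.1]
      exact nhdsGT_neBot a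
    have := tendsto_nhds_unique hlim2 hlim1
    rw [hwa, sub_self] at this
    linarith [sub_eq_zero.1 this]
  -- Step 2: g = P n on Icc a t
  intro x hx
  have h2 : ∀ z ∈ Icc a t, (fun z => g z - P n z) z = (fun z => g z - P n z) a := by
    apply constant_of_has_deriv_right_zero
    · exact ((g_cont hg).mono (fun z hz => le_trans haI hz.1)).sub
        (P_contDiff n).continuous.continuousOn
    · intro z hz
      have hz1 : (-1:ℝ) ≤ z := le_trans haI hz.1
      have hgz : HasDerivWithinAt g (WW z) (Ici z) z :=
        (g_hasDeriv hg hz1).mono (fun w hw => le_trans hz1 hw)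
      have hPz : HasDerivWithinAt (P n) (Pd n z) (Ici z) z :=
        (P_hasDeriv n z).hasDerivWithinAt
      have hWz : WW z = Pd n z := by
        rcases eq_or_lt_of_le hz.1 with h | h
        · rw [← h]; exact hwa
        · exact step1 z ⟨h, hz.2⟩
      have := hgz.sub hPz
      rw [hWz, sub_self] at this
      exact this
  have := h2 x hx
  simp only at this
  rw [hga, P_root_left, sub_zero] at this
  linarith [sub_eq_zero.1 this]


lemma extend_piece (n : ℕ)
    (hga : g (Yseq n) = 0)
    (hwa : derivWithin g (Ici (-1:ℝ)) (Yseq n) = Pd n (Yseq n))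
    (hstart : ∃ u, Yseq n < u ∧ ∀ x ∈ Ioo (Yseq n) u, 0 < sgn n * g x) :
    EqOn g (P n) (Icc (Yseq n) (Yseq (n+1))) := by
  set a := Yseq n with ha
  set b := Yseq (n+1) with hb
  have hab : a < b := (Yseq_prop n).2.2
  have haI : (-1:ℝ) ≤ a := (Yseq_prop n).1
  set K := {t : ℝ | t ∈ Icc a b ∧ ∀ x ∈ Ioo a t, 0 < sgn n * g x} with hK
  have haK : a ∈ K := ⟨⟨le_rfl, hab.le⟩, fun x hx => absurd hx.2 (not_lt.2 hx.1.le)⟩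
  have hbdd : BddAbove K := ⟨b, fun t ht => ht.1.2⟩
  set c := sSup K with hc
  have hca : a ≤ c := le_csSup hbdd haK
  have hcb : c ≤ b := csSup_le ⟨a, haK⟩ (fun t ht => ht.1.2)
  have hac : a < c := by
    obtain ⟨u, hu1, hu2⟩ := hstart
    have ht0 : min u b ∈ K := by
      refine ⟨⟨le_min hu1.le hab.le, min_le_right _ _⟩, fun x hx => ?_⟩
      exact hu2 x ⟨hx.1, lt_of_lt_of_le hx.2 (min_le_left _ _)⟩
    calc a < min u b := lt_min hu1 hab
    _ ≤ c := le_csSup hbdd ht0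
  have hIoo : ∀ x ∈ Ioo a c, 0 < sgn n * g x := by
    intro x hx
    obtain ⟨t, htK, hxt⟩ := exists_lt_of_lt_csSup ⟨a, haK⟩ hx.2
    exact htK.2 x ⟨hx.1, hxt⟩
  have heqc : EqOn g (P n) (Icc a c) := piece_uniq hg n hac hcb hga hwa hIoo
  have hcbb : c = b := by
    by_contra hne
    have hclt : c < b := lt_of_le_of_ne hcb hne
    have hgc : 0 < sgn n * g c := by
      rw [heqc ⟨hca, le_rfl⟩]
      exact P_sign ⟨hac, hclt⟩
    have hcont : ContinuousAt (fun z => sgn n * g z) c := by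
      apply ContinuousAt.mul continuousAt_const
      exact ((g_cont hg) c (le_trans haI hca)).continuousAt
        (Ici_mem_nhds (lt_of_lt_of_le (lt_of_le_of_lt haI hac) le_rfl))
    have hev : {z : ℝ | 0 < sgn n * g z} ∈ nhds c := hcont.preimage_mem_nhds (Ioi_mem_nhds hgc)
    obtain ⟨η, hη, hball⟩ := Metric.mem_nhds_iff.1 hev
    have ht' : min b (c + η/2) ∈ K := by
      refine ⟨⟨le_trans hca (lt_min hclt (by linarith)).le, min_le_left _ _⟩, fun x hx => ?_⟩
      rcases lt_or_ge x c with h | h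
      · exact hIoo x ⟨hx.1, h⟩
      · apply hball
        rw [Metric.mem_ball, Real.dist_eq, abs_lt]
        have := lt_of_lt_of_le hx.2 (min_le_right _ _)
        constructor <;> [linarith; linarith]
    have h1 : min b (c + η/2) ≤ c := le_csSup hbdd ht'
    have h2 : c < min b (c + η/2) := lt_min hclt (by linarith)
    linarith
  rw [hcbb] at heqc
  exact heqc


lemma endpoint_deriv (n : ℕ) (heq : EqOn g (P n) (Icc (Yseq n) (Yseq (n+1)))) :
    derivWithin g (Ici (-1:ℝ)) (Yseq (n+1)) = Pd n (Yseq (n+1)) := by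
  set a := Yseq n with ha
  set b := Yseq (n+1) with hb
  have hab : a < b := (Yseq_prop n).2.2
  have haI : (-1:ℝ) ≤ a := (Yseq_prop n).1
  have hsub : Icc a b ⊆ Ici (-1:ℝ) := fun z hz => le_trans haI hz.1
  have hgb : HasDerivWithinAt g (derivWithin g (Ici (-1:ℝ)) b) (Icc a b) b :=
    (g_hasDeriv hg (le_trans haI hab.le)).mono hsub
  have hgb' : HasDerivWithinAt (P n) (derivWithin g (Ici (-1:ℝ)) b) (Icc a b) b :=
    hgb.congr (fun z hz => (heq hz).symm) (heq (right_mem_Icc.2 hab.le)).symm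
  have hu : UniqueDiffWithinAt ℝ (Icc a b) b := (uniqueDiffOn_Icc hab) b (right_mem_Icc.2 hab.le)
  exact (hgb'.derivWithin hu).symm.trans
    (((P_hasDeriv n b).hasDerivWithinAt (s := Icc a b)).derivWithin hu)

lemma next_start (n : ℕ) (hgb : g (Yseq (n+1)) = 0)
    (hwb : derivWithin g (Ici (-1:ℝ)) (Yseq (n+1)) = Pd (n+1) (Yseq (n+1))) :
    ∃ u, Yseq (n+1) < u ∧ ∀ x ∈ Ioo (Yseq (n+1)) u, 0 < sgn (n+1) * g x := by
  set b := Yseq (n+1) with hbdef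
  set d := Pd (n+1) b with hd
  have hbgt : (-1:ℝ) < b := lt_of_lt_of_le (by norm_num) (Yseq_prop n).2.1
  have hsd : 0 < sgn (n+1) * d := Pd_left_sign n
  have hder : HasDerivAt g d b := by
    have h1 : DifferentiableAt ℝ g b :=
      (hg.1.differentiableOn one_ne_zero b hbgt.le).differentiableAt (Ici_mem_nhds hbgt)
    have h2 := h1.hasDerivAt
    rwa [← W_eq_deriv hbgt (g := g), hwb] at h2
  have hslope : Filter.Tendsto (slope g b) (nhdsWithin b (Ioi b)) (nhds d) := by
    have := (hder.hasDerivWithinAt (s := Ioi b))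
    rw [hasDerivWithinAt_iff_tendsto_slope, Set.diff_singleton_eq_self notMem_Ioi_self] at this
    exact this
  have hslope2 : Filter.Tendsto (fun x => sgn (n+1) * slope g b x)
      (nhdsWithin b (Ioi b)) (nhds (sgn (n+1) * d)) := hslope.const_mul _
  have hev : ∀ᶠ x in nhdsWithin b (Ioi b), 0 < sgn (n+1) * g x := by
    filter_upwards [hslope2.eventually (eventually_gt_nhds hsd), self_mem_nhdsWithin]
      with x hx1 hx2
    have hxb : b < x := hx2
    have hsl : slope g b x = g x / (x - b) := by
      rw [slope_def_field, hgb, sub_zero]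
    rw [hsl] at hx1
    have hpos : 0 < x - b := by linarith
    have := mul_pos hx1 hpos
    rw [mul_assoc, div_mul_cancel₀ _ (ne_of_gt hpos)] at this
    exact this
  obtain ⟨u, hu1, hu2⟩ := mem_nhdsGT_iff_exists_Ioo_subset.1 hev
  exact ⟨u, hu1, fun x hx => hu2 hx⟩

lemma g_eq_F : EqOn g F (Ici (-1:ℝ)) := by
  have main : ∀ n, EqOn g (P n) (Icc (Yseq n) (Yseq (n+1))) := by
    intro n
    induction n with
    | zero =>
      refine extend_piece hg 0 ?_ ?_ ?_
      · rw [show Yseq 0 = (-1:ℝ) from rfl]; exact hg.2.1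
      · rw [show Yseq 0 = (-1:ℝ) from rfl, hg.2.2.1, Pd0_neg_one]
      · obtain ⟨δ, hδ, hp⟩ := hg.2.2.2.1
        refine ⟨-1 + δ, by rw [show Yseq 0 = (-1:ℝ) from rfl]; linarith, fun x hx => ?_⟩
        have hx' : x ∈ Ioo (-1:ℝ) (-1 + δ) := by
          rwa [show Yseq 0 = (-1:ℝ) from rfl] at hx
        simpa [sgn] using hp x hx'
    | succ m ih =>
      have hgb : g (Yseq (m+1)) = 0 := by
        rw [ih (right_mem_Icc.2 (Yseq_prop m).2.2.le), P_root_right]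
      have hwb := endpoint_deriv hg m ih
      rw [← Pd_match m] at hwb
      exact extend_piece hg (m+1) hgb hwb (next_start hg m hgb hwb)
  intro x hx
  have h1 : Yseq (Nidx x) ≤ x := Nidx_le hx
  have h2 : x < Yseq (Nidx x + 1) := Nidx_lt x
  rw [F_eqOn _ ⟨h1, h2⟩]
  exact main (Nidx x) ⟨h1, h2.le⟩

end uniq

lemma F_zero_exists {x : ℝ} (hx : -1 < x) (h0 : F x = 0) : ∃ m, x = Yseq (m+1) := by
  set n := Nidx x with hn
  have hm1 : Yseq n ≤ x := Nidx_le hx.le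
  have hm2 : x < Yseq (n + 1) := Nidx_lt x
  have hF : F x = P n x := F_eqOn _ ⟨hm1, hm2⟩
  have heq : x = Yseq n := by
    by_contra h
    exact P_ne_zero ⟨lt_of_le_of_ne hm1 (Ne.symm h), hm2⟩ (hF ▸ h0)
  rcases hN : n with _ | m
  · exfalso; rw [hN] at heq; rw [heq] at hx; exact lt_irrefl _ hx
  · exact ⟨m, by rw [hN] at heq; exact heq⟩

/-- The limit problem `f'' + sign(f)·y = 0`,
`f(-1) = f'(-1) = 0`, has a solution, the solution is unique on `[-1, ∞)`,
it changes sign at each of its zeros, and its zeros in `(-1, ∞)` listed in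
increasing order form an infinite sequence `y₁ < y₂ < ⋯` with `y₁ = 2`,
`y₂ = 3√2 - 1`, and
`y_{i+1} = (√(17y_i² - 4y_i y_{i-1} - 4y_{i-1}²) - y_i)/2` for `i ≥ 2`. -/
theorem stmt11 :
    (∃ f : ℝ → ℝ, IsLimitSol f) ∧
    (∀ f g : ℝ → ℝ, IsLimitSol f → IsLimitSol g →
      Set.EqOn f g (Set.Ici (-1 : ℝ))) ∧
    (∀ f : ℝ → ℝ, IsLimitSol f →
      (∀ y : ℝ, -1 < y → f y = 0 →
        ∃ δ > 0, ∀ u ∈ Set.Ioo (y - δ) y, ∀ v ∈ Set.Ioo y (y + δ),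
          f u * f v < 0) ∧
      ∃ z : ℕ → ℝ, StrictMono z ∧
        (∀ i : ℕ, -1 < z i ∧ f (z i) = 0) ∧
        (∀ y : ℝ, -1 < y → f y = 0 → ∃ i : ℕ, z i = y) ∧
        z 0 = 2 ∧
        z 1 = 3 * Real.sqrt 2 - 1 ∧
        (∀ i : ℕ, z (i + 2) =
          (Real.sqrt (17 * z (i + 1) ^ 2 - 4 * z (i + 1) * z i - 4 * z i ^ 2)
            - z (i + 1)) / 2)) := by
  refine ⟨⟨F, IsLimitSol_F⟩, fun f g hf hg x hx => (g_eq_F hf hx).trans (g_eq_F hg hx).symm,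
    fun f hf => ?_⟩
  have hEq : EqOn f F (Ici (-1:ℝ)) := g_eq_F hf
  constructor
  · intro y hy hy0
    have hF0 : F y = 0 := (hEq hy.le).symm.trans hy0
    obtain ⟨m, hm⟩ := F_zero_exists hy hF0
    obtain ⟨_, _, hg1⟩ := Yseq_prop m
    obtain ⟨_, _, hg2⟩ := Yseq_prop (m+1)
    refine ⟨min (Yseq (m+1) - Yseq m) (Yseq (m+2) - Yseq (m+1)),
      lt_min (by linarith) (by linarith), fun u hu v hv => ?_⟩
    have hmin1 := min_le_left (Yseq (m+1) - Yseq m) (Yseq (m+2) - Yseq (m+1))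
    have hmin2 := min_le_right (Yseq (m+1) - Yseq m) (Yseq (m+2) - Yseq (m+1))
    rw [hm] at hu hv
    have hu' : u ∈ Ioo (Yseq m) (Yseq (m+1)) := ⟨by linarith [hu.1], hu.2⟩
    have hv' : v ∈ Ioo (Yseq (m+1)) (Yseq (m+2)) := ⟨hv.1, by linarith [hv.2]⟩
    have hfu : f u = P m u := by
      rw [hEq (le_trans (Yseq_prop m).1 hu'.1.le), F_eqOn m ⟨hu'.1.le, hu'.2⟩]
    have hfv : f v = P (m+1) v := by
      rw [hEq (le_trans (Yseq_prop (m+1)).1 hv'.1.le), F_eqOn (m+1) ⟨hv'.1.le, hv'.2⟩]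
    rw [hfu, hfv]
    have h1 := P_sign hu'
    have h2 := P_sign hv'
    have hss := sgn_succ m
    have hq := sgn_sq m
    have hprod := mul_pos h1 h2
    rw [hss] at hprod
    nlinarith [hprod, hq]
  · refine ⟨fun i => Yseq (i+1), fun i j hij => Yseq_mono (by omega), fun i => ⟨?_, ?_⟩,
      ?_, ?_, ?_, fun i => ?_⟩
    · have := (Yseq_prop i).2.1; linarith
    · rw [hEq (le_trans (by norm_num) (Yseq_prop i).2.1), F_zero]
    · intro y hy hy0
      obtain ⟨m, hm⟩ := F_zero_exists hy ((hEq hy.le).symm.trans hy0)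
      exact ⟨m, hm.symm⟩
    · rfl
    · show Yseq 2 = 3 * Real.sqrt 2 - 1
      rw [Yseq_rec 0, show Yseq 1 = (2:ℝ) from rfl, show Yseq 0 = (-1:ℝ) from rfl]
      rw [show 17 * (2:ℝ) ^ 2 - 4 * 2 * (-1) - 4 * (-1) ^ 2 = 6^2 * 2 by norm_num]
      rw [Real.sqrt_mul (by positivity) 2, Real.sqrt_sq (by norm_num : (0:ℝ) ≤ 6)]
      ring
    · exact Yseq_rec (i+1)
end

section
/- Let y2 = 3√2 − 1 and define Ỹ : [−1, y2] → ℝ by Ỹ(y) = −(1/6)(y+1)²(y−2) for −1 ≤ y ≤ 2 and Ỹ(y) = (1/6)(y−2)(y−y2)(y+2+y2) for 2 ≤ y ≤ y2. Then: Ỹ(−1) = 0 and Ỹ'(−1) = 0; Ỹ > 0 on (−1, 2) and Ỹ < 0 on (2, y2); Ỹ''(y) = −y for all y ∈ (−1, 2) and Ỹ''(y) = y for all y ∈ (2, y2); and the two pieces match in a C¹ fashion at y = 2, both one-sided derivatives there being equal to −3/2. Hence Ỹ is a C¹ function on [−1, y2] satisfying Ỹ'' + sign(Ỹ)·y = 0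 wherever Ỹ ≠ 0, with first zeros y_1 = 2 and y_2 = 3√2 − 1 after the interface at −1. -/
/-!
On each side of `y = 2` the profile is a cubic, so `Ỹ'' = ∓y` is a direct computation. Since
`y₂ (y₂ + 2) = 17`, the second arc expands to `(y³ - 21 y + 34) / 6`, whose derivative
`(y² - 7) / 2` agrees with the derivative `(1 - y²) / 2` of the first arc at `y = 2`; both arcs
vanish there, so gluing them gives a `C¹` function whose derivative is again glued piecewise.
-/

open Set Filter Topology

section Gluing

variable {f g : ℝ → ℝ} {a : ℝ}

theorem ite_le_eventuallyEq_left {x : ℝ} (hx : x < a) :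
    (fun y => if y ≤ a then f y else g y) =ᶠ[𝓝 x] f :=
  eventually_of_mem (Iio_mem_nhds hx) fun _ hy => if_pos (le_of_lt hy)

theorem ite_le_eventuallyEq_right {x : ℝ} (hx : a < x) :
    (fun y => if y ≤ a then f y else g y) =ᶠ[𝓝 x] g :=
  eventually_of_mem (Ioi_mem_nhds hx) fun _ hy => if_neg (not_le.2 hy)

theorem deriv_ite_le_of_lt {x : ℝ} (hx : x < a) :
    deriv (fun y => if y ≤ a then f y else g y) x = deriv f x :=
  (ite_le_eventuallyEq_left hx).deriv_eq

theorem deriv_ite_le_of_gt {x : ℝ} (hx : a < x) :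
    deriv (fun y => if y ≤ a then f y else g y) x = deriv g x :=
  (ite_le_eventuallyEq_right hx).deriv_eq

theorem hasDerivWithinAt_Iic_ite_le {c : ℝ} (hf : HasDerivAt f c a) :
    HasDerivWithinAt (fun y => if y ≤ a then f y else g y) c (Iic a) a :=
  hf.hasDerivWithinAt.congr (fun _ hy => if_pos hy) (if_pos le_rfl)

theorem hasDerivWithinAt_Ici_ite_le {c : ℝ} (hg : HasDerivAt g c a) (hfg : f a = g a) :
    HasDerivWithinAt (fun y => if y ≤ a then f y else g y) c (Ici a) a := by
  refine hg.hasDerivWithinAt.congr (fun y hy => ?_) (by simp [hfg])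
  rcases (mem_Ici.1 hy).eq_or_lt with rfl | hy
  · simp [hfg]
  · exact if_neg (not_le.2 hy)

variable {f' g' : ℝ → ℝ}

theorem hasDerivAt_ite_le (hf : ∀ x, HasDerivAt f (f' x) x) (hg : ∀ x, HasDerivAt g (g' x) x)
    (hfg : f a = g a) (hfg' : f' a = g' a) (x : ℝ) :
    HasDerivAt (fun y => if y ≤ a then f y else g y) (if x ≤ a then f' x else g' x) x := by
  rcases lt_trichotomy x a with hx | rfl | hx
  · rw [if_pos hx.le]
    exact (hf x).congr_of_eventuallyEq (ite_le_eventuallyEq_left hx)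
  · rw [if_pos le_rfl, ← hasDerivWithinAt_univ, ← Iic_union_Ici]
    exact (hasDerivWithinAt_Iic_ite_le (hf x)).union
      (hfg' ▸ hasDerivWithinAt_Ici_ite_le (hg x) hfg)
  · rw [if_neg (not_le.2 hx)]
    exact (hg x).congr_of_eventuallyEq (ite_le_eventuallyEq_right hx)

theorem deriv_ite_le (hf : ∀ x, HasDerivAt f (f' x) x) (hg : ∀ x, HasDerivAt g (g' x) x)
    (hfg : f a = g a) (hfg' : f' a = g' a) :
    deriv (fun y => if y ≤ a then f y else g y) = fun x => if x ≤ a then f' x else g' x :=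
  funext fun x => (hasDerivAt_ite_le hf hg hfg hfg' x).deriv

theorem contDiff_one_ite_le (hf : ∀ x, HasDerivAt f (f' x) x) (hg : ∀ x, HasDerivAt g (g' x) x)
    (hfg : f a = g a) (hfg' : f' a = g' a) (hf' : Continuous f') (hg' : Continuous g') :
    ContDiff ℝ 1 (fun y => if y ≤ a then f y else g y) := by
  refine contDiff_one_iff_deriv.2
    ⟨fun x => (hasDerivAt_ite_le hf hg hfg hfg' x).differentiableAt, ?_⟩
  rw [deriv_ite_le hf hg hfg hfg']
  exact hf'.if_le hg' continuous_id continuous_const fun x hx => hx ▸ hfg'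

end Gluing

noncomputable def secondZero : ℝ := 3 * √2 - 1

noncomputable def firstArc (y : ℝ) : ℝ := -(1 / 6) * (y + 1) ^ 2 * (y - 2)

noncomputable def secondArc (y : ℝ) : ℝ :=
  (1 / 6) * (y - 2) * (y - secondZero) * (y + 2 + secondZero)

noncomputable def limitEigenfunction (y : ℝ) : ℝ := if y ≤ 2 then firstArc y else secondArc y

theorem two_lt_secondZero : 2 < secondZero := by
  have : (1 : ℝ) < √2 := by rw [Real.lt_sqrt zero_le_one]; norm_num
  unfold secondZero; linarith

theorem secondZero_mul_add_two : secondZero * (secondZero + 2) = 17 := by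
  have h : √2 ^ 2 = 2 := Real.sq_sqrt (by norm_num)
  unfold secondZero; linear_combination 9 * h

theorem secondArc_eq (y : ℝ) : secondArc y = (y ^ 3 - 21 * y + 34) / 6 := by
  unfold secondArc; linear_combination (-(1 / 6) * (y - 2)) * secondZero_mul_add_two

theorem hasDerivAt_firstArc (y : ℝ) : HasDerivAt firstArc ((1 - y ^ 2) / 2) y := by
  have h := ((((hasDerivAt_id' y).add_const 1).fun_pow 2).const_mul (-(1 / 6 : ℝ))).mul
    ((hasDerivAt_id' y).sub_const 2)
  exact h.congr_deriv (by push_cast; ring)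

theorem hasDerivAt_secondArc (y : ℝ) : HasDerivAt secondArc ((y ^ 2 - 7) / 2) y := by
  rw [show secondArc = fun y => (y ^ 3 - 21 * y + 34) / 6 from funext secondArc_eq]
  have h := (((hasDerivAt_pow 3 y).sub ((hasDerivAt_id' y).const_mul 21)).add_const 34).div_const 6
  exact h.congr_deriv (by push_cast; ring)

theorem firstArc_two_eq_secondArc_two : firstArc 2 = secondArc 2 := by
  simp [firstArc, secondArc]

theorem firstArc_pos {y : ℝ} (hy : y ∈ Ioo (-1) 2) : 0 < firstArc y := by
  have h1 : 0 < (y + 1) ^ 2 := by nlinarith [hy.1]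
  have h2 : 0 < 2 - y := by linarith [hy.2]
  unfold firstArc; nlinarith

theorem secondArc_neg {y : ℝ} (hy : y ∈ Ioo 2 secondZero) : secondArc y < 0 := by
  obtain ⟨h2, hy₂⟩ := hy
  have h1 : 0 < (y - 2) * (y + 2 + secondZero) := by
    have := two_lt_secondZero; apply mul_pos <;> linarith
  unfold secondArc; nlinarith

theorem limitEigenfunction_pos {y : ℝ} (hy : y ∈ Ioo (-1) 2) : 0 < limitEigenfunction y := by
  rw [limitEigenfunction, if_pos hy.2.le]; exact firstArc_pos hy

theorem limitEigenfunction_neg {y : ℝ} (hy : y ∈ Ioo 2 secondZero) :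
    limitEigenfunction y < 0 := by
  rw [limitEigenfunction, if_neg (not_le.2 hy.1)]; exact secondArc_neg hy

theorem limitEigenfunction_neg_one : limitEigenfunction (-1) = 0 := by
  norm_num [limitEigenfunction, firstArc]

theorem limitEigenfunction_two : limitEigenfunction 2 = 0 := by
  norm_num [limitEigenfunction, firstArc]

theorem limitEigenfunction_secondZero : limitEigenfunction secondZero = 0 := by
  rw [limitEigenfunction, if_neg (not_le.2 two_lt_secondZero)]; simp [secondArc]

theorem hasDerivWithinAt_limitEigenfunction_Iic :
    HasDerivWithinAt limitEigenfunction (-(3 / 2)) (Iic 2) 2 :=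
  hasDerivWithinAt_Iic_ite_le ((hasDerivAt_firstArc 2).congr_deriv (by norm_num))

theorem hasDerivWithinAt_limitEigenfunction_Ici :
    HasDerivWithinAt limitEigenfunction (-(3 / 2)) (Ici 2) 2 :=
  hasDerivWithinAt_Ici_ite_le ((hasDerivAt_secondArc 2).congr_deriv (by norm_num)) firstArc_two_eq_secondArc_two

theorem deriv_limitEigenfunction :
    deriv limitEigenfunction = fun y => if y ≤ 2 then (1 - y ^ 2) / 2 else (y ^ 2 - 7) / 2 :=
  deriv_ite_le hasDerivAt_firstArc hasDerivAt_secondArc firstArc_two_eq_secondArc_two (by norm_num)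

theorem deriv_limitEigenfunction_neg_one : deriv limitEigenfunction (-1) = 0 := by
  norm_num [deriv_limitEigenfunction]

theorem contDiff_limitEigenfunction : ContDiff ℝ 1 limitEigenfunction :=
  contDiff_one_ite_le hasDerivAt_firstArc hasDerivAt_secondArc firstArc_two_eq_secondArc_two (by norm_num)
    (by fun_prop) (by fun_prop)

theorem deriv_deriv_limitEigenfunction_of_lt {y : ℝ} (hy : y < 2) :
    deriv (deriv limitEigenfunction) y = -y := by
  rw [deriv_limitEigenfunction, deriv_ite_le_of_lt hy]
  exact (((hasDerivAt_pow 2 y).const_sub 1).div_const 2).deriv.trans (by ring)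

theorem deriv_deriv_limitEigenfunction_of_gt {y : ℝ} (hy : 2 < y) :
    deriv (deriv limitEigenfunction) y = y := by
  rw [deriv_limitEigenfunction, deriv_ite_le_of_gt hy]
  exact (((hasDerivAt_pow 2 y).sub_const 7).div_const 2).deriv.trans (by ring)

theorem limitEigenfunction_ode {y : ℝ} (hy : y ∈ Ioo (-1) secondZero)
    (hY : limitEigenfunction y ≠ 0) :
    deriv (deriv limitEigenfunction) y + Real.sign (limitEigenfunction y) * y = 0 := by
  rcases lt_trichotomy y 2 with h | rfl | h
  · rw [deriv_deriv_limitEigenfunction_of_lt h,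
      Real.sign_of_pos (limitEigenfunction_pos ⟨hy.1, h⟩)]
    ring
  · exact absurd limitEigenfunction_two hY
  · rw [deriv_deriv_limitEigenfunction_of_gt h,
      Real.sign_of_neg (limitEigenfunction_neg ⟨h, hy.2⟩)]
    ring

/-- Verification of the first two arcs of the limit
(`n = +∞`) first nonlinear eigenfunction: with `y₂ = 3√2 - 1` and
`Ỹ(y) = -(1/6)(y+1)²(y-2)` for `y ≤ 2`, `Ỹ(y) = (1/6)(y-2)(y-y₂)(y+2+y₂)`
for `y ≥ 2`, one has `Ỹ(-1) = Ỹ'(-1) = 0`, `Ỹ > 0` on `(-1,2)`, `Ỹ < 0` on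
`(2,y₂)`, `Ỹ'' = -y` on `(-1,2)`, `Ỹ'' = y` on `(2,y₂)`, both one-sided
derivatives at `2` equal `-3/2`, `Ỹ` is C¹ on `[-1, y₂]`, and
`Ỹ'' + sign(Ỹ)·y = 0` wherever `Ỹ ≠ 0` on `(-1, y₂)`. -/
theorem stmt12 :
    let y₂ : ℝ := 3 * Real.sqrt 2 - 1
    let Yt : ℝ → ℝ := fun y =>
      if y ≤ 2 then -(1 / 6) * (y + 1) ^ 2 * (y - 2)
      else (1 / 6) * (y - 2) * (y - y₂) * (y + 2 + y₂)
    Yt (-1) = 0 ∧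
    deriv Yt (-1) = 0 ∧
    (∀ y ∈ Set.Ioo (-1 : ℝ) 2, 0 < Yt y) ∧
    (∀ y ∈ Set.Ioo (2 : ℝ) y₂, Yt y < 0) ∧
    (∀ y ∈ Set.Ioo (-1 : ℝ) 2, deriv (deriv Yt) y = -y) ∧
    (∀ y ∈ Set.Ioo (2 : ℝ) y₂, deriv (deriv Yt) y = y) ∧
    HasDerivWithinAt Yt (-(3 / 2)) (Set.Iic 2) 2 ∧
    HasDerivWithinAt Yt (-(3 / 2)) (Set.Ici 2) 2 ∧
    ContDiffOn ℝ 1 Yt (Set.Icc (-1 : ℝ) y₂) ∧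
    Yt 2 = 0 ∧
    Yt y₂ = 0 ∧
    (∀ y ∈ Set.Ioo (-1 : ℝ) y₂, Yt y ≠ 0 →
      deriv (deriv Yt) y + Real.sign (Yt y) * y = 0) := by
  intro y₂ Yt
  exact ⟨limitEigenfunction_neg_one, deriv_limitEigenfunction_neg_one,
    fun _ => limitEigenfunction_pos, fun _ => limitEigenfunction_neg,
    fun _ hy => deriv_deriv_limitEigenfunction_of_lt hy.2,
    fun _ hy => deriv_deriv_limitEigenfunction_of_gt hy.1,
    hasDerivWithinAt_limitEigenfunction_Iic, hasDerivWithinAt_limitEigenfunction_Ici,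
    contDiff_limitEigenfunction.contDiffOn, limitEigenfunction_two,
    limitEigenfunction_secondZero, fun _ => limitEigenfunction_ode⟩
end

section
/- Let a and b be real numbers with 0 < a < b. Then 17b² − 4ab − 4a² > 0, and the quadratic equation z² + b·z + (ab + a² − 4b²) = 0 has exactly one real root z satisfying z > b, namely z = ( √(17b² − 4ab − 4a²) − b ) / 2. -/
/-!
The discriminant of `z² + bz + (ab + a² - 4b²)` is `D = 17b² - 4ab - 4a²`, and
`D - (3b)² = 4(b - a)(2b + a) > 0`. Hence `√D > 3b`, so the larger root `(√D - b)/2` exceeds `b`,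
while the smaller root `(-√D - b)/2` is negative.
-/

theorem eq_larger_root_iff_of_le_of_lt {p q t z : ℝ} (hd : 0 ≤ discrim 1 p q)
    (h_small : (-√(discrim 1 p q) - p) / 2 ≤ t) (h_large : t < (√(discrim 1 p q) - p) / 2) :
    (t < z ∧ z ^ 2 + p * z + q = 0) ↔ z = (√(discrim 1 p q) - p) / 2 := by
  have h_roots := quadratic_eq_zero_iff one_ne_zero (Real.mul_self_sqrt hd).symm z
  rw [one_mul, ← sq, mul_one] at h_roots
  rw [h_roots]
  constructor
  · rintro ⟨ht, h_root | h_root⟩ <;> linarith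
  · rintro rfl
    exact ⟨h_large, Or.inl (by ring)⟩

/-- For `0 < a < b` one has `17b² - 4ab - 4a² > 0`, and the
quadratic `z² + bz + (ab + a² - 4b²) = 0` has exactly one real root with
`z > b`, namely `z = (√(17b² - 4ab - 4a²) - b)/2`. -/
theorem stmt13 (a b : ℝ) (ha : 0 < a) (hab : a < b) :
    0 < 17 * b ^ 2 - 4 * a * b - 4 * a ^ 2 ∧
    (∀ z : ℝ,
      (b < z ∧ z ^ 2 + b * z + (a * b + a ^ 2 - 4 * b ^ 2) = 0) ↔
        z = (Real.sqrt (17 * b ^ 2 - 4 * a * b - 4 * a ^ 2) - b) / 2) := by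
  have hb : 0 < b := ha.trans hab
  have h_discrim :
      discrim 1 b (a * b + a ^ 2 - 4 * b ^ 2) = 17 * b ^ 2 - 4 * a * b - 4 * a ^ 2 := by
    rw [discrim]
    ring
  have h_sq_lt : (3 * b) ^ 2 < 17 * b ^ 2 - 4 * a * b - 4 * a ^ 2 := by
    nlinarith [mul_pos (sub_pos.2 hab) (by linarith : 0 < 2 * b + a)]
  have h_sqrt : 3 * b < √(17 * b ^ 2 - 4 * a * b - 4 * a ^ 2) :=
    (Real.lt_sqrt (by positivity)).2 h_sq_lt
  have h_pos : 0 < 17 * b ^ 2 - 4 * a * b - 4 * a ^ 2 :=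
    (sq_nonneg (3 * b)).trans_lt h_sq_lt
  refine ⟨h_pos, fun z => ?_⟩
  rw [← h_discrim] at h_pos h_sqrt ⊢
  exact eq_larger_root_iff_of_le_of_lt h_pos.le
    (by linarith [Real.sqrt_nonneg (discrim 1 b (a * b + a ^ 2 - 4 * b ^ 2))]) (by linarith)
end

section
/- Let a, b, c be real numbers with 0 < a < b < c. Define the cubic polynomials P(y) = (y − a)(y − b)·(−y/6 − (a+b)/6) and N(y) = (y − b)(y − c)·(y/6 + (b+c)/6). Then P''(y) = −y and N''(y) = y for all y, P(b) = N(b) = 0, and the derivative-matching condition P'(b) = N'(b) holds if and only if c² + b·c − 4b² + a·b + a² = 0. -/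
/-! The factor `y + p + q` is the one that kills the quadratic term of `(y - p) (y - q) (·)`, so
`k (y - p) (y - q) (y + p + q) = k y³ - k (p² + pq + q²) y + k pq (p + q)`: its second derivative
is `6 k y`, and its slope at `q` is `k (2q² - p² - pq)`. With `k = ∓1/6` on consecutive
positivity/negativity intervals `(a, b)`, `(b, c)`, the two slopes at `b` agree exactly
when `-(2b² - a² - ab) = 2b² - bc - c²`. -/

noncomputable def cubicArc (k p q : ℝ) (y : ℝ) : ℝ := k * (y - p) * (y - q) * (y + p + q)

lemma cubicArc_left_eq_zero (k p q : ℝ) : cubicArc k p q p = 0 := by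
  simp [cubicArc]

lemma cubicArc_right_eq_zero (k p q : ℝ) : cubicArc k p q q = 0 := by
  simp [cubicArc]

lemma hasDerivAt_cubicArc (k p q y : ℝ) :
    HasDerivAt (cubicArc k p q) (k * (3 * y ^ 2 - (p ^ 2 + p * q + q ^ 2))) y := by
  have h := (((hasDerivAt_pow 3 y).sub
    ((hasDerivAt_id' y).const_mul (p ^ 2 + p * q + q ^ 2))).add_const (p * q * (p + q))).const_mul k
  refine (h.congr_deriv (by ring)).congr_of_eventuallyEq (.of_forall fun x => ?_)
  simp only [cubicArc, Pi.sub_apply]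
  ring

lemma deriv_cubicArc (k p q : ℝ) :
    deriv (cubicArc k p q) = fun y => k * (3 * y ^ 2 - (p ^ 2 + p * q + q ^ 2)) :=
  funext fun y => (hasDerivAt_cubicArc k p q y).deriv

lemma deriv_deriv_cubicArc (k p q y : ℝ) : deriv (deriv (cubicArc k p q)) y = 6 * k * y := by
  rw [deriv_cubicArc]
  have h := (((hasDerivAt_pow 2 y).const_mul 3).sub_const (p ^ 2 + p * q + q ^ 2)).const_mul k
  rw [h.deriv]
  ring

lemma deriv_cubicArc_eq_neg_iff {k : ℝ} (hk : k ≠ 0) (p q r : ℝ) :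
    deriv (cubicArc k p q) q = deriv (cubicArc (-k) q r) q ↔
      r ^ 2 + q * r - 4 * q ^ 2 + p * q + p ^ 2 = 0 := by
  rw [deriv_cubicArc, deriv_cubicArc]
  constructor
  · intro h
    apply mul_left_cancel₀ hk
    linear_combination -h
  · intro h
    linear_combination -k * h

theorem stmt14_general (a b c : ℝ) :
    let P : ℝ → ℝ := fun y => (y - a) * (y - b) * (-y / 6 - (a + b) / 6)
    let N : ℝ → ℝ := fun y => (y - b) * (y - c) * (y / 6 + (b + c) / 6)
    (∀ y : ℝ, deriv (deriv P) y = -y) ∧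
    (∀ y : ℝ, deriv (deriv N) y = y) ∧
    P b = 0 ∧ N b = 0 ∧
    (deriv P b = deriv N b ↔
      c ^ 2 + b * c - 4 * b ^ 2 + a * b + a ^ 2 = 0) := by
  intro P N
  have hP : P = cubicArc (-(1 / 6)) a b := by funext y; simp only [P, cubicArc]; ring
  have hN : N = cubicArc (-(-(1 / 6))) b c := by funext y; simp only [N, cubicArc]; ring
  rw [hP, hN]
  refine ⟨fun y => ?_, fun y => ?_, cubicArc_right_eq_zero _ _ _, cubicArc_left_eq_zero _ _ _,
    deriv_cubicArc_eq_neg_iff (by norm_num) a b c⟩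
  · rw [deriv_deriv_cubicArc]; ring
  · rw [deriv_deriv_cubicArc]; ring

/-- C¹ gluing of successive cubic arcs for the limit ODE
`Ỹ'' + sign(Ỹ)·y = 0` (`k = 1`, `l = 0`): with `0 < a < b < c`,
`P(y) = (y-a)(y-b)(-y/6 - (a+b)/6)` and `N(y) = (y-b)(y-c)(y/6 + (b+c)/6)`
satisfy `P'' = -y`, `N'' = y`, `P(b) = N(b) = 0`, and `P'(b) = N'(b)` iff
`c² + bc - 4b² + ab + a² = 0`. -/
theorem stmt14 (a b c : ℝ) (ha : 0 < a) (hab : a < b) (hbc : b < c) :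
    let P : ℝ → ℝ := fun y => (y - a) * (y - b) * (-y / 6 - (a + b) / 6)
    let N : ℝ → ℝ := fun y => (y - b) * (y - c) * (y / 6 + (b + c) / 6)
    (∀ y : ℝ, deriv (deriv P) y = -y) ∧
    (∀ y : ℝ, deriv (deriv N) y = y) ∧
    P b = 0 ∧ N b = 0 ∧
    (deriv P b = deriv N b ↔
      c ^ 2 + b * c - 4 * b ^ 2 + a * b + a ^ 2 = 0) :=
  stmt14_general a b c
end

section
/- Let a, b, c be real numbers with 0 < a < b < c. Define the cubic polynomials N(y) = (y − a)(y − b)·( y/3 + ab/(3(a+b)) ) and P(y) = (y − b)(y − c)·( −y/3 − bc/(3(b+c)) ). Then N(b) = P(b) = 0 and the derivative-matching condition N'(b) = P'(b) holds if and only if a·c² + b·c² + a²·b + a²·c = a·b·c + b²·c + a·b² + b³. -/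
/-! Both arcs carry the factor `y - b`, so they vanish at `b`, and the derivative of
`(y - p) (y - b) g(y)` at `b` is just `(b - p) g(b)`. After clearing denominators the two
slopes at `b` differ by `-2 b Q / (3 (a + b) (b + c))`, where `Q` is the difference of the two
sides of the cubic relation; since `b`, `a + b`, `b + c` are nonzero, they agree iff `Q = 0`. -/

lemma deriv_sub_mul_sub_mul_at_right_root {𝕜 : Type*} [NontriviallyNormedField 𝕜] {p q : 𝕜}
    {g : 𝕜 → 𝕜} (hg : DifferentiableAt 𝕜 g q) :
    deriv (fun y => (y - p) * (y - q) * g y) q = (q - p) * g q := by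
  have h : HasDerivAt (fun y => (y - p) * (y - q) * g y)
      ((1 * (q - q) + (q - p) * 1) * g q + (q - p) * (q - q) * deriv g q) q :=
    (((hasDerivAt_id' q).sub_const p).mul ((hasDerivAt_id' q).sub_const q)).mul hg.hasDerivAt
  rw [h.deriv]
  ring

lemma deriv_sub_mul_sub_mul_at_left_root {𝕜 : Type*} [NontriviallyNormedField 𝕜] {p q : 𝕜}
    {g : 𝕜 → 𝕜} (hg : DifferentiableAt 𝕜 g q) :
    deriv (fun y => (y - q) * (y - p) * g y) q = (q - p) * g q := by
  simpa only [mul_comm (_ - q) (_ - p)] using deriv_sub_mul_sub_mul_at_right_root (p := p) hg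

lemma cubicArc_slope_sub_slope_eq {a b c : ℝ} (hab : a + b ≠ 0) (hbc : b + c ≠ 0) :
    (b - a) * (b / 3 + a * b / (3 * (a + b))) - (b - c) * (-b / 3 - b * c / (3 * (b + c)))
      = -2 * b * ((a * c ^ 2 + b * c ^ 2 + a ^ 2 * b + a ^ 2 * c)
          - (a * b * c + b ^ 2 * c + a * b ^ 2 + b ^ 3)) / (3 * (a + b) * (b + c)) := by
  field_simp
  ring

/-- C¹ gluing of successive cubic arcs for the second limit
nonlinear eigenfunction (`k = 1`, `l = 1`): with `0 < a < b < c`,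
`N(y) = (y-a)(y-b)(y/3 + ab/(3(a+b)))` and
`P(y) = (y-b)(y-c)(-y/3 - bc/(3(b+c)))` satisfy `N(b) = P(b) = 0`, and
`N'(b) = P'(b)` iff `ac² + bc² + a²b + a²c = abc + b²c + ab² + b³`. -/
theorem stmt16 (a b c : ℝ) (ha : 0 < a) (hab : a < b) (hbc : b < c) :
    let N : ℝ → ℝ := fun y => (y - a) * (y - b) * (y / 3 + a * b / (3 * (a + b)))
    let P : ℝ → ℝ := fun y => (y - b) * (y - c) * (-y / 3 - b * c / (3 * (b + c)))
    N b = 0 ∧ P b = 0 ∧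
    (deriv N b = deriv P b ↔
      a * c ^ 2 + b * c ^ 2 + a ^ 2 * b + a ^ 2 * c
        = a * b * c + b ^ 2 * c + a * b ^ 2 + b ^ 3) := by
  intro N P
  have hb : b ≠ 0 := by linarith
  have hab' : a + b ≠ 0 := by linarith
  have hbc' : b + c ≠ 0 := by linarith
  have hN : deriv N b = (b - a) * (b / 3 + a * b / (3 * (a + b))) :=
    deriv_sub_mul_sub_mul_at_right_root (by fun_prop)
  have hP : deriv P b = (b - c) * (-b / 3 - b * c / (3 * (b + c))) :=
    deriv_sub_mul_sub_mul_at_left_root (by fun_prop)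
  refine ⟨by simp [N], by simp [P], ?_⟩
  rw [hN, hP, ← sub_eq_zero, cubicArc_slope_sub_slope_eq hab' hbc']
  simp [hb, hab', hbc', sub_eq_zero]
end

section
/- Let y2 = 1 + √2 and define U1(y) = −(1/2)·y·(y+1)² for −1 ≤ y ≤ 0 and U2(y) = y·(y − y2)·( y/2 + 1/(2y2) ) for 0 ≤ y ≤ y2. Then: U1(−1) = 0 and U1'(−1) = 0; U1 > 0 on (−1, 0) and U2 < 0 on (0, y2); y²·U1''(y) − 2y·U1'(y) + 2·U1(y) + y³ = 0 for all y, and y²·U2''(y) − 2y·U2'(y) + 2·U2(y) − y³ = 0 for all y; and the two pieces match to second order at the singular point y = 0: U1(0) = U2(0) = 0, U1'(0) = U2'(0) = −1/2, and U1''(0) = U2''(0) = −2. Moreover y2 = 1 + √2 is the unique positive number z for which this second-derivative matching holds, i.e. the unique positive root of 1/z − z = −2, equivalently of z² − 2z − 1 = 0. -/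
/-!
Both arcs are cubics vanishing at `0`. On cubics the Euler operator
`L U = y² U'' - 2 y U' + 2 U` kills `y` and `y²` and sends `y³` to `2 y³`, so
`L (a y³ + b y² + c y + d) = 2 a y³ + 2 d`: a cubic with `d = 0` solves
`L U = ∓ y³` exactly when `a = ∓ 1/2`. Both arcs have `U'(0) = -1/2`, and the
second arc `y (y - z) (y/2 + 1/(2z))` has `U''(0) = 1/z - z`, so matching
`U1''(0) = -2` amounts to `z² - 2z - 1 = 0`, whose only positive root is `1 + √2`.
-/

open Real

def cubicFun (a b c d y : ℝ) : ℝ := a * y ^ 3 + b * y ^ 2 + c * y + d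

section Cubic

variable (a b c d : ℝ)

theorem hasDerivAt_cubicFun (x : ℝ) :
    HasDerivAt (cubicFun a b c d) (3 * a * x ^ 2 + 2 * b * x + c) x := by
  have h := ((((hasDerivAt_pow 3 x).const_mul a).add
    ((hasDerivAt_pow 2 x).const_mul b)).add ((hasDerivAt_id x).const_mul c)).add_const d
  exact h.congr_deriv (by push_cast; ring)

theorem deriv_cubicFun :
    deriv (cubicFun a b c d) = fun x => 3 * a * x ^ 2 + 2 * b * x + c :=
  funext fun x => (hasDerivAt_cubicFun a b c d x).deriv

theorem deriv_deriv_cubicFun :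
    deriv (deriv (cubicFun a b c d)) = fun x => 6 * a * x + 2 * b := by
  have hquad : (fun x => 3 * a * x ^ 2 + 2 * b * x + c) = cubicFun 0 (3 * a) (2 * b) c :=
    funext fun x => by simp only [cubicFun]; ring
  rw [deriv_cubicFun, hquad, deriv_cubicFun]
  funext x; ring

theorem euler_operator_cubicFun (y : ℝ) :
    y ^ 2 * deriv (deriv (cubicFun a b c d)) y - 2 * y * deriv (cubicFun a b c d) y
      + 2 * cubicFun a b c d y = 2 * a * y ^ 3 + 2 * d := by
  rw [deriv_deriv_cubicFun, deriv_cubicFun]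
  simp only [cubicFun]; ring

end Cubic

theorem first_arc_eq_cubicFun :
    (fun y : ℝ => -(1 / 2) * y * (y + 1) ^ 2) = cubicFun (-(1 / 2)) (-1) (-(1 / 2)) 0 := by
  funext y; simp only [cubicFun]; ring

theorem second_arc_eq_cubicFun {z : ℝ} (hz : z ≠ 0) :
    (fun y : ℝ => y * (y - z) * (y / 2 + 1 / (2 * z)))
      = cubicFun (1 / 2) ((1 / z - z) / 2) (-(1 / 2)) 0 := by
  funext y; simp only [cubicFun]; field_simp; ring

theorem deriv_deriv_second_arc_zero {z : ℝ} (hz : z ≠ 0) :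
    deriv (deriv (fun y : ℝ => y * (y - z) * (y / 2 + 1 / (2 * z)))) 0 = 1 / z - z := by
  rw [second_arc_eq_cubicFun hz, deriv_deriv_cubicFun]; ring

theorem sq_sub_two_mul_sub_one_eq_zero_iff {z : ℝ} (hz : 0 < z) :
    z ^ 2 - 2 * z - 1 = 0 ↔ z = 1 + √2 := by
  have hsq : √2 * √2 = 2 := mul_self_sqrt zero_le_two
  constructor
  · intro h
    have hroots : (z - (1 + √2)) * (z - (1 - √2)) = 0 := by
      linear_combination h - hsq
    rcases mul_eq_zero.1 hroots with h | h
    · linarith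
    · nlinarith [sqrt_nonneg 2]
  · rintro rfl
    linear_combination hsq

theorem one_div_sub_eq_neg_two_iff {z : ℝ} (hz : 0 < z) :
    1 / z - z = -2 ↔ z = 1 + √2 := by
  rw [← sq_sub_two_mul_sub_one_eq_zero_iff hz]
  constructor
  · intro h
    field_simp at h
    linear_combination -h
  · intro h
    field_simp
    linear_combination -h

/-- First two arcs of the third limit nonlinear
eigenfunction (`k = 1`, `l = 2`, equation `y²Ỹ'' - 2yỸ' + 2Ỹ + sign(Ỹ)y³ = 0`):
with `y₂ = 1 + √2`, `U1(y) = -(1/2)y(y+1)²` and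
`U2(y) = y(y - y₂)(y/2 + 1/(2y₂))`, the two arcs satisfy the interface
conditions, the sign conditions, their respective equations, and match to
second order at the singular point `y = 0` (`U1 = U2 = 0`, `U1' = U2' = -1/2`,
`U1'' = U2'' = -2` there); moreover `y₂` is the unique positive `z` for which
the second-derivative matching holds, i.e. the unique positive root of
`1/z - z = -2`, equivalently of `z² - 2z - 1 = 0`. -/
theorem stmt17 :
    let y₂ : ℝ := 1 + Real.sqrt 2
    let U1 : ℝ → ℝ := fun y => -(1 / 2) * y * (y + 1) ^ 2
    let U2 : ℝ → ℝ := fun y => y * (y - y₂) * (y / 2 + 1 / (2 * y₂))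
    U1 (-1) = 0 ∧
    deriv U1 (-1) = 0 ∧
    (∀ y ∈ Set.Ioo (-1 : ℝ) 0, 0 < U1 y) ∧
    (∀ y ∈ Set.Ioo (0 : ℝ) y₂, U2 y < 0) ∧
    (∀ y : ℝ,
      y ^ 2 * deriv (deriv U1) y - 2 * y * deriv U1 y + 2 * U1 y + y ^ 3 = 0) ∧
    (∀ y : ℝ,
      y ^ 2 * deriv (deriv U2) y - 2 * y * deriv U2 y + 2 * U2 y - y ^ 3 = 0) ∧
    U1 0 = 0 ∧ U2 0 = 0 ∧
    deriv U1 0 = -(1 / 2) ∧ deriv U2 0 = -(1 / 2) ∧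
    deriv (deriv U1) 0 = -2 ∧ deriv (deriv U2) 0 = -2 ∧
    (∀ z : ℝ, 0 < z →
      (deriv (deriv (fun y : ℝ => y * (y - z) * (y / 2 + 1 / (2 * z)))) 0 = -2
        ↔ z = 1 + Real.sqrt 2)) ∧
    (∀ z : ℝ, 0 < z → (1 / z - z = -2 ↔ z = 1 + Real.sqrt 2)) ∧
    (∀ z : ℝ, 0 < z → (z ^ 2 - 2 * z - 1 = 0 ↔ z = 1 + Real.sqrt 2)) := by
  intro y₂ U1 U2
  have hy₂ : 0 < y₂ := by positivity
  have hU1 : U1 = cubicFun (-(1 / 2)) (-1) (-(1 / 2)) 0 := first_arc_eq_cubicFun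
  have hU2 : U2 = cubicFun (1 / 2) (-1) (-(1 / 2)) 0 := by
    show (fun y => y * (y - y₂) * (y / 2 + 1 / (2 * y₂))) = _
    rw [second_arc_eq_cubicFun hy₂.ne', (one_div_sub_eq_neg_two_iff hy₂).2 rfl]
    norm_num
  refine ⟨?_, ?_, ?_, ?_, fun y => ?_, fun y => ?_, ?_, ?_, ?_, ?_, ?_, ?_,
    fun z hz => deriv_deriv_second_arc_zero hz.ne' ▸ one_div_sub_eq_neg_two_iff hz,
    fun z hz => one_div_sub_eq_neg_two_iff hz,
    fun z hz => sq_sub_two_mul_sub_one_eq_zero_iff hz⟩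
  · norm_num [U1]
  · norm_num [hU1, deriv_cubicFun]
  · rintro y ⟨hy_left, hy_right⟩
    exact mul_pos (by linarith) (pow_pos (by linarith) 2)
  · rintro y ⟨hy_pos, hy_lt⟩
    have hfactor : 0 < y / 2 + 1 / (2 * y₂) := by positivity
    exact mul_neg_of_neg_of_pos (mul_neg_of_pos_of_neg hy_pos (by linarith)) hfactor
  · rw [hU1]; linear_combination euler_operator_cubicFun (-(1 / 2)) (-1) (-(1 / 2)) 0 y
  · rw [hU2]; linear_combination euler_operator_cubicFun (1 / 2) (-1) (-(1 / 2)) 0 y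
  · norm_num [U1]
  · norm_num [U2]
  · norm_num [hU1, deriv_cubicFun]
  · norm_num [hU2, deriv_cubicFun]
  · norm_num [hU1, deriv_deriv_cubicFun]
  · norm_num [hU2, deriv_deriv_cubicFun]
end
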